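/- arXiv:0707.2867 — 9 statements merged into one kernel-verified Lean document; each statement's English description precedes it below -/
import Mathlib

section
/- Let S be a symmetric 3×3 real matrix and k ∈ ℝ³. The alternating bilinear map B_{S,k}(u,v) = S(u×v) + k×(u×v) on ℝ³ satisfies the Jacobi identity (i.e., defines a Lie algebra structure on ℝ³) if and only if Sk = 0. In particular, for k = 0 the map (u,v) ↦ S(u×v) is a Lie bracket for every symmetric S. -/
/-!
The Jacobiator of `B_{S,k}` is alternating and trilinear on a three-dimensional space, hence the
triple product `u ⬝ᵥ (v ⨯₃ w)` times a fixed vector; expanding in coordinates, the symmetry of `S`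
cancels every term not involving `k`, and that vector is `-2 • S k`. Evaluating at the standard
basis then gives the equivalence.
-/

open Matrix

def jacobiator {V : Type*} [Add V] (B : V → V → V) (u v w : V) : V :=
  B (B u v) w + B (B v w) u + B (B w u) v

theorem jacobiator_symm_add_cross_bracket {R : Type*} [CommRing R]
    {S : Matrix (Fin 3) (Fin 3) R} (hS : S.IsSymm) (k u v w : Fin 3 → R) :
    jacobiator (fun x y => S *ᵥ (x ⨯₃ y) + k ⨯₃ (x ⨯₃ y)) u v w
      = (-2 * (u ⬝ᵥ v ⨯₃ w)) • S *ᵥ k := by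
  have h10 := hS.apply 0 1
  have h20 := hS.apply 0 2
  have h21 := hS.apply 1 2
  ext i
  fin_cases i <;>
  · simp [jacobiator, mulVec, dotProduct, Fin.sum_univ_three, cross_apply, vecHead, vecTail,
      h10, h20, h21]
    ring

theorem jacobiator_symm_bracket {R : Type*} [CommRing R]
    {S : Matrix (Fin 3) (Fin 3) R} (hS : S.IsSymm) (u v w : Fin 3 → R) :
    jacobiator (fun x y => S *ᵥ (x ⨯₃ y)) u v w = 0 := by
  simpa using jacobiator_symm_add_cross_bracket hS 0 u v w

theorem jacobiator_symm_add_cross_bracket_eq_zero_iff {R : Type*} [Field R] [NeZero (2 : R)]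
    {S : Matrix (Fin 3) (Fin 3) R} (hS : S.IsSymm) (k : Fin 3 → R) :
    (∀ u v w, jacobiator (fun x y => S *ᵥ (x ⨯₃ y) + k ⨯₃ (x ⨯₃ y)) u v w = 0) ↔
      S *ᵥ k = 0 := by
  simp_rw [jacobiator_symm_add_cross_bracket hS]
  refine ⟨fun h => ?_, fun h u v w => by rw [h, smul_zero]⟩
  have hbasis : (![1, 0, 0] : Fin 3 → R) ⬝ᵥ ![0, 1, 0] ⨯₃ ![0, 0, 1] = 1 := by
    simp [cross_apply, dotProduct, Fin.sum_univ_three]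
  simpa [hbasis, two_ne_zero] using h ![1, 0, 0] ![0, 1, 0] ![0, 0, 1]

/-- For a symmetric 3×3 real matrix `S` and `k ∈ ℝ³`, the alternating
bilinear map `B(u,v) = S(u×v) + k×(u×v)` satisfies the Jacobi identity if and only if
`Sk = 0`; in particular, for `k = 0` the map `(u,v) ↦ S(u×v)` is a Lie bracket for
every symmetric `S`. -/
theorem linear_poisson_compatible_pair :
    (∀ (S : Matrix (Fin 3) (Fin 3) ℝ), S.IsSymm → ∀ (k : Fin 3 → ℝ)
      (B : (Fin 3 → ℝ) → (Fin 3 → ℝ) → (Fin 3 → ℝ)),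
      (∀ u v, B u v = S.mulVec (crossProduct u v) + crossProduct k (crossProduct u v)) →
      ((∀ u v w, B (B u v) w + B (B v w) u + B (B w u) v = 0) ↔ S.mulVec k = 0)) ∧
    (∀ (S : Matrix (Fin 3) (Fin 3) ℝ), S.IsSymm →
      ∀ u v w : Fin 3 → ℝ,
        S.mulVec (crossProduct (S.mulVec (crossProduct u v)) w) +
        S.mulVec (crossProduct (S.mulVec (crossProduct v w)) u) +
        S.mulVec (crossProduct (S.mulVec (crossProduct w u)) v) = 0) := by
  refine ⟨fun S hS k B hB => ?_, fun S hS => jacobiator_symm_bracket hS⟩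
  obtain rfl : B = fun x y => S *ᵥ (x ⨯₃ y) + k ⨯₃ (x ⨯₃ y) := funext₂ hB
  exact jacobiator_symm_add_cross_bracket_eq_zero_iff hS k
end

section
/- Let S₁, S₂ be symmetric 3×3 real matrices and k₁, k₂ ∈ ℝ³ with S₁k₁ = 0 and S₂k₂ = 0, and let B_{Sᵢ,kᵢ}(u,v) = Sᵢ(u×v) + kᵢ×(u×v) be the corresponding Lie brackets on ℝ³. An invertible matrix T ∈ GL(3,ℝ) satisfies T·B_{S₁,k₁}(u,v) = B_{S₂,k₂}(Tu,Tv) for all u,v ∈ ℝ³ (i.e., T is a Lie algebra isomorphism) if and only if S₂ = det(T)⁻¹·T S₁ Tᵀ and k₂ = (Tᵀ)⁻¹ k₁. -/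
/-!
Write `[k]ₓ` for the skew matrix of `v ↦ k ⨯₃ v`, so that `B_{S,k}(u,v) = (S + [k]ₓ)(u ⨯₃ v)`.
Since `Tu ⨯₃ Tv = (adj T)ᵀ (u ⨯₃ v)` and cross products span `ℝ³`, `T` intertwines the brackets
iff `T (S₁ + [k₁]ₓ) Tᵀ = det T • (S₂ + [k₂]ₓ)`. Conjugation acts on skew matrices by
`T [k]ₓ Tᵀ = det T • [(Tᵀ)⁻¹ k]ₓ`, and it keeps `T S₁ Tᵀ` symmetric, so comparing symmetric and
skew parts of both sides gives the two conditions.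
-/

open Matrix

namespace Matrix

variable {R : Type*} [CommRing R]

def crossMatrix (a : Fin 3 → R) : Matrix (Fin 3) (Fin 3) R :=
  !![0, -a 2, a 1; a 2, 0, -a 0; -a 1, a 0, 0]

@[simp]
lemma crossMatrix_mulVec (a v : Fin 3 → R) : crossMatrix a *ᵥ v = a ⨯₃ v := by
  ext i
  fin_cases i <;> simp [crossMatrix, cross_apply, mulVec, dotProduct, Fin.sum_univ_three] <;> ring

lemma crossMatrix_transpose (a : Fin 3 → R) : (crossMatrix a)ᵀ = crossMatrix (-a) := by
  ext i j
  fin_cases i <;> fin_cases j <;> simp [crossMatrix]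

lemma crossMatrix_sub (a b : Fin 3 → R) : crossMatrix (a - b) = crossMatrix a - crossMatrix b := by
  ext i j
  fin_cases i <;> fin_cases j <;> simp [crossMatrix] <;> abel

lemma crossMatrix_injective : Function.Injective (crossMatrix : (Fin 3 → R) → _) := by
  intro a b h
  ext i
  fin_cases i
  · simpa [crossMatrix] using congrFun (congrFun h 2) 1
  · simpa [crossMatrix] using congrFun (congrFun h 0) 2
  · simpa [crossMatrix] using congrFun (congrFun h 1) 0

lemma add_crossMatrix_inj [IsAddTorsionFree R] {S S' : Matrix (Fin 3) (Fin 3) R}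
    (hS : S.IsSymm) (hS' : S'.IsSymm) {a b : Fin 3 → R} :
    S + crossMatrix a = S' + crossMatrix b ↔ S = S' ∧ a = b := by
  refine ⟨fun h => ?_, fun ⟨hS, hab⟩ => hS ▸ hab ▸ rfl⟩
  have hW : crossMatrix (b - a) = S - S' := by
    rw [crossMatrix_sub, sub_eq_sub_iff_add_eq_add, add_comm, h]
  have hba : b - a = 0 := by
    refine self_eq_neg.mp (crossMatrix_injective ?_)
    rw [← crossMatrix_transpose, hW, (hS.sub hS').eq]
  obtain rfl : a = b := (sub_eq_zero.mp hba).symm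
  exact ⟨add_right_cancel h, rfl⟩

lemma cross_single_add_one_single_add_two (i : Fin 3) :
    Pi.single (i + 1) 1 ⨯₃ Pi.single (i + 2) 1 = (Pi.single i 1 : Fin 3 → R) := by
  ext j
  fin_cases i <;> fin_cases j <;> simp [cross_apply]

lemma ext_of_mulVec_cross {A B : Matrix (Fin 3) (Fin 3) R}
    (h : ∀ u v, A *ᵥ (u ⨯₃ v) = B *ᵥ (u ⨯₃ v)) : A = B :=
  ext_of_mulVec_single fun i => by
    simpa only [cross_single_add_one_single_add_two] using
      h (Pi.single (i + 1) 1) (Pi.single (i + 2) 1)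

lemma mulVec_cross_mulVec (T : Matrix (Fin 3) (Fin 3) R) (u v : Fin 3 → R) :
    (T *ᵥ u) ⨯₃ (T *ᵥ v) = (adjugate T)ᵀ *ᵥ (u ⨯₃ v) := by
  ext i
  fin_cases i <;>
    simp [adjugate_fin_three, cross_apply, mulVec, dotProduct, Fin.sum_univ_three] <;> ring

lemma transpose_mulVec_cross_mulVec (T : Matrix (Fin 3) (Fin 3) R) (u v : Fin 3 → R) :
    Tᵀ *ᵥ ((T *ᵥ u) ⨯₃ (T *ᵥ v)) = T.det • (u ⨯₃ v) := by
  rw [mulVec_cross_mulVec, mulVec_mulVec, ← transpose_mul, adjugate_mul, transpose_smul,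
    transpose_one, smul_mulVec, one_mulVec]

lemma transpose_mul_crossMatrix_mul (T : Matrix (Fin 3) (Fin 3) R) (a : Fin 3 → R) :
    Tᵀ * crossMatrix (T *ᵥ a) * T = T.det • crossMatrix a :=
  ext_of_mulVec_single fun i => by
    rw [← mulVec_mulVec, ← mulVec_mulVec, crossMatrix_mulVec, transpose_mulVec_cross_mulVec,
      smul_mulVec, crossMatrix_mulVec]

lemma mul_crossMatrix_mul_transpose {T : Matrix (Fin 3) (Fin 3) R} (hT : IsUnit T.det)
    (a : Fin 3 → R) : T * crossMatrix a * Tᵀ = T.det • crossMatrix ((Tᵀ)⁻¹ *ᵥ a) := by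
  simpa [mulVec_mulVec, mul_nonsing_inv _ (isUnit_det_transpose T hT)] using
    transpose_mul_crossMatrix_mul Tᵀ ((Tᵀ)⁻¹ *ᵥ a)

lemma forall_mulVec_cross_iff {T : Matrix (Fin 3) (Fin 3) R} (hT : IsUnit T.det)
    (M₁ M₂ : Matrix (Fin 3) (Fin 3) R) :
    (∀ u v, T *ᵥ (M₁ *ᵥ (u ⨯₃ v)) = M₂ *ᵥ ((T *ᵥ u) ⨯₃ (T *ᵥ v))) ↔
      T * M₁ * Tᵀ = T.det • M₂ := by
  have hTt : IsUnit Tᵀ := (isUnit_iff_isUnit_det _).mpr (isUnit_det_transpose T hT)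
  have : M₂ * (adjugate T)ᵀ * Tᵀ = T.det • M₂ := by
    rw [mul_assoc, ← transpose_mul, mul_adjugate, transpose_smul, transpose_one, mul_smul_one]
  simp_rw [mulVec_cross_mulVec, mulVec_mulVec]
  rw [← this, hTt.mul_left_inj]
  exact ⟨ext_of_mulVec_cross, fun h u v => h ▸ rfl⟩

end Matrix

theorem linear_poisson_isomorphism_general
    (S₁ S₂ : Matrix (Fin 3) (Fin 3) ℝ) (hS₁ : S₁.IsSymm) (hS₂ : S₂.IsSymm)
    (k₁ k₂ : Fin 3 → ℝ)
    (B₁ B₂ : (Fin 3 → ℝ) → (Fin 3 → ℝ) → (Fin 3 → ℝ))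
    (hB₁ : ∀ u v, B₁ u v = S₁.mulVec (crossProduct u v) + crossProduct k₁ (crossProduct u v))
    (hB₂ : ∀ u v, B₂ u v = S₂.mulVec (crossProduct u v) + crossProduct k₂ (crossProduct u v))
    (T : Matrix (Fin 3) (Fin 3) ℝ) (hT : IsUnit T.det) :
    (∀ u v, T.mulVec (B₁ u v) = B₂ (T.mulVec u) (T.mulVec v)) ↔
      (S₂ = (T.det)⁻¹ • (T * S₁ * Tᵀ) ∧ k₂ = (Tᵀ)⁻¹.mulVec k₁) := by
  have hB₁' u v : B₁ u v = (S₁ + crossMatrix k₁) *ᵥ (u ⨯₃ v) := by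
    rw [hB₁, add_mulVec, crossMatrix_mulVec]
  have hB₂' u v : B₂ u v = (S₂ + crossMatrix k₂) *ᵥ (u ⨯₃ v) := by
    rw [hB₂, add_mulVec, crossMatrix_mulVec]
  have hTS₁ : (T * S₁ * Tᵀ).IsSymm := by
    simp only [IsSymm, transpose_mul, transpose_transpose, hS₁.eq, mul_assoc]
  simp_rw [hB₁', hB₂']
  rw [forall_mulVec_cross_iff hT, eq_comm, ← eq_inv_smul_iff₀ hT.ne_zero, mul_add, add_mul,
    mul_crossMatrix_mul_transpose hT, smul_add, inv_smul_smul₀ hT.ne_zero,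
    add_crossMatrix_inj hS₂ (hTS₁.smul _)]

/-- For Lie brackets `B_{Sᵢ,kᵢ}(u,v) = Sᵢ(u×v) + kᵢ×(u×v)` on `ℝ³`
(with `Sᵢ` symmetric, `Sᵢkᵢ = 0`), an invertible matrix `T` is a Lie algebra
isomorphism `T·B₁(u,v) = B₂(Tu,Tv)` if and only if `S₂ = det(T)⁻¹·T S₁ Tᵀ` and
`k₂ = (Tᵀ)⁻¹ k₁`. -/
theorem linear_poisson_isomorphism
    (S₁ S₂ : Matrix (Fin 3) (Fin 3) ℝ) (hS₁ : S₁.IsSymm) (hS₂ : S₂.IsSymm)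
    (k₁ k₂ : Fin 3 → ℝ) (hk₁ : S₁.mulVec k₁ = 0) (hk₂ : S₂.mulVec k₂ = 0)
    (B₁ B₂ : (Fin 3 → ℝ) → (Fin 3 → ℝ) → (Fin 3 → ℝ))
    (hB₁ : ∀ u v, B₁ u v = S₁.mulVec (crossProduct u v) + crossProduct k₁ (crossProduct u v))
    (hB₂ : ∀ u v, B₂ u v = S₂.mulVec (crossProduct u v) + crossProduct k₂ (crossProduct u v))
    (T : Matrix (Fin 3) (Fin 3) ℝ) (hT : IsUnit T.det) :
    (∀ u v, T.mulVec (B₁ u v) = B₂ (T.mulVec u) (T.mulVec v)) ↔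
      (S₂ = (T.det)⁻¹ • (T * S₁ * Tᵀ) ∧ k₂ = (Tᵀ)⁻¹.mulVec k₁) :=
  linear_poisson_isomorphism_general S₁ S₂ hS₁ hS₂ k₁ k₂ B₁ B₂ hB₁ hB₂ T hT
end

section
/- Let S be a symmetric 3×3 real matrix and k ∈ ℝ³ with Sk = 0, and let B_{S,k}(u,v) = S(u×v) + k×(u×v) be the corresponding Lie bracket on ℝ³. A matrix D ∈ M₃(ℝ) is a derivation of this Lie algebra, i.e. D·B_{S,k}(u,v) = B_{S,k}(Du,v) + B_{S,k}(u,Dv) for all u,v ∈ ℝ³, if and only if DS + SDᵀ = tr(D)·S and Dᵀk = 0. -/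
set_option maxHeartbeats 1600000


open Matrix

/-- For the Lie bracket `B_{S,k}(u,v) = S(u×v) + k×(u×v)` on `ℝ³`
(with `S` symmetric, `Sk = 0`), a matrix `D` is a derivation if and only if
`DS + SDᵀ = tr(D)·S` and `Dᵀk = 0`. -/
theorem linear_poisson_derivations
    (S : Matrix (Fin 3) (Fin 3) ℝ) (hS : S.IsSymm)
    (k : Fin 3 → ℝ) (hk : S.mulVec k = 0)
    (B : (Fin 3 → ℝ) → (Fin 3 → ℝ) → (Fin 3 → ℝ))
    (hB : ∀ u v, B u v = S.mulVec (crossProduct u v) + crossProduct k (crossProduct u v))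
    (D : Matrix (Fin 3) (Fin 3) ℝ) :
    (∀ u v, D.mulVec (B u v) = B (D.mulVec u) v + B u (D.mulVec v)) ↔
      (D * S + S * Dᵀ = D.trace • S ∧ Dᵀ.mulVec k = 0) := by
  have s10 : S 1 0 = S 0 1 := hS.apply 0 1
  have s20 : S 2 0 = S 0 2 := hS.apply 0 2
  have s21 : S 2 1 = S 1 2 := hS.apply 1 2
  constructor
  · intro h
    have P1 := h ![0,1,0] ![0,0,1]
    have P2 := h ![0,0,1] ![1,0,0]
    have P3 := h ![1,0,0] ![0,1,0]
    simp only [hB] at P1 P2 P3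
    have F10 := congrFun P1 0; have F11 := congrFun P1 1; have F12 := congrFun P1 2
    have F20 := congrFun P2 0; have F21 := congrFun P2 1; have F22 := congrFun P2 2
    have F30 := congrFun P3 0; have F31 := congrFun P3 1; have F32 := congrFun P3 2
    simp only [crossProduct, Matrix.mulVec, dotProduct, Fin.sum_univ_three,
      LinearMap.mk₂_apply, Pi.add_apply, Pi.zero_apply, Matrix.cons_val_zero,
      Matrix.cons_val_one, Matrix.head_cons, Matrix.cons_val_two, Matrix.tail_cons,
      s10, s20, s21, mul_zero, mul_one, zero_mul, one_mul, add_zero, zero_add,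
      sub_zero, zero_sub, sub_self] at F10 F11 F12 F20 F21 F22 F30 F31 F32
    constructor
    · ext i j
      fin_cases i <;> fin_cases j <;>
        simp only [Matrix.mul_apply, Matrix.add_apply, Matrix.smul_apply, smul_eq_mul,
          Matrix.trace, Matrix.diag_apply, Fin.sum_univ_three, Matrix.transpose_apply,
          s10, s20, s21, Fin.mk_zero, Fin.mk_one, Fin.reduceFinMk]
      · linear_combination F10
      · linear_combination (F20 + F11)/2
      · linear_combination (F30 + F12)/2
      · linear_combination (F20 + F11)/2
      · linear_combination F21
      · linear_combination (F31 + F22)/2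
      · linear_combination (F30 + F12)/2
      · linear_combination (F31 + F22)/2
      · linear_combination F32
    · funext j
      fin_cases j <;>
        simp only [Matrix.mulVec, dotProduct, Fin.sum_univ_three,
          Matrix.transpose_apply, Pi.zero_apply, Fin.mk_zero, Fin.mk_one, Fin.reduceFinMk]
      · linear_combination (F31 - F22)/2
      · linear_combination (F12 - F30)/2
      · linear_combination (F20 - F11)/2
  · rintro ⟨hDS, hDk⟩
    have hd : ∀ i j : Fin 3, D i 0 * S 0 j + D i 1 * S 1 j + D i 2 * S 2 j +
        (S i 0 * D j 0 + S i 1 * D j 1 + S i 2 * D j 2) =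
        (D 0 0 + D 1 1 + D 2 2) * S i j := by
      intro i j
      have h2 := congrFun (congrFun hDS i) j
      simp only [Matrix.mul_apply, Matrix.add_apply, Matrix.smul_apply, smul_eq_mul,
        Matrix.trace, Matrix.diag_apply, Fin.sum_univ_three, Matrix.transpose_apply] at h2
      linarith [h2]
    have hc : ∀ j : Fin 3, D 0 j * k 0 + D 1 j * k 1 + D 2 j * k 2 = 0 := by
      intro j
      have h2 := congrFun hDk j
      simp only [Matrix.mulVec, dotProduct, Fin.sum_univ_three,
        Matrix.transpose_apply, Pi.zero_apply] at h2
      linarith [h2]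
    intro u v
    simp only [hB]
    funext i
    fin_cases i <;>
      simp only [crossProduct, Matrix.mulVec, dotProduct, Fin.sum_univ_three,
        LinearMap.mk₂_apply, Pi.add_apply, Matrix.cons_val_zero, Matrix.cons_val_one,
        Matrix.head_cons, Matrix.cons_val_two, Matrix.tail_cons, Fin.mk_zero, Fin.mk_one, Fin.reduceFinMk]
    · linear_combination (u 1*v 2 - u 2*v 1) * hd 0 0 + (u 2*v 0 - u 0*v 2) * hd 0 1 +
        (u 0*v 1 - u 1*v 0) * hd 0 2 - (u 0*v 1 - u 1*v 0) * hc 1 + (u 2*v 0 - u 0*v 2) * hc 2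
    · linear_combination (u 1*v 2 - u 2*v 1) * hd 1 0 + (u 2*v 0 - u 0*v 2) * hd 1 1 +
        (u 0*v 1 - u 1*v 0) * hd 1 2 - (u 1*v 2 - u 2*v 1) * hc 2 + (u 0*v 1 - u 1*v 0) * hc 0
    · linear_combination (u 1*v 2 - u 2*v 1) * hd 2 0 + (u 2*v 0 - u 0*v 2) * hd 2 1 +
        (u 0*v 1 - u 1*v 0) * hd 2 2 - (u 2*v 0 - u 0*v 2) * hc 0 + (u 1*v 2 - u 2*v 1) * hc 1
end

section
/- Consider the 'book algebra' Lie bracket on ℝ³ given by B(u,v) = u₃·v − v₃·u (equivalently B(u,v) = −e₃×(u×v)). An invertible matrix T ∈ GL(3,ℝ) is an automorphism of this bracket, i.e. T·B(u,v) = B(Tu,Tv) for all u,v ∈ ℝ³, if and only if the third row of T equals (0,0,1), i.e. T₃₁ = T₃₂ = 0 and T₃₃ = 1. -/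
open Matrix

/-- For the "book algebra" bracket `B(u,v) = u₃·v − v₃·u` on `ℝ³`
(equivalently `B(u,v) = −e₃×(u×v)`), an invertible matrix `T ∈ GL(3,ℝ)` is an
automorphism of this bracket if and only if the third row of `T` is `(0,0,1)`. -/
theorem aut_book_algebra
    (B : (Fin 3 → ℝ) → (Fin 3 → ℝ) → (Fin 3 → ℝ))
    (hB : ∀ u v, B u v = u 2 • v - v 2 • u)
    (T : Matrix (Fin 3) (Fin 3) ℝ) (hT : IsUnit T.det) :
    (∀ u v, T.mulVec (B u v) = B (T.mulVec u) (T.mulVec v)) ↔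
      (T 2 0 = 0 ∧ T 2 1 = 0 ∧ T 2 2 = 1) := by
  have hinj : Function.Injective T.mulVec := by
    intro x y hxy
    have h1 : T⁻¹ * T = 1 := Matrix.nonsing_inv_mul T hT
    have := congrArg (T⁻¹.mulVec) hxy
    simpa [Matrix.mulVec_mulVec, h1] using this
  constructor
  · intro h
    -- columns of T
    have hc : ∀ j : Fin 3, T.mulVec (Pi.single j 1) ≠ 0 := by
      intro j hj
      have : (Pi.single j (1:ℝ) : Fin 3 → ℝ) = 0 := by
        apply hinj
        simpa using hj
      have := congrFun this j
      simp at this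
    -- from h e0 e2
    have h02 := h (Pi.single 0 1) (Pi.single 2 1)
    rw [hB, hB] at h02
    simp [Matrix.mulVec_single] at h02
    have h12 := h (Pi.single 1 1) (Pi.single 2 1)
    rw [hB, hB] at h12
    simp [Matrix.mulVec_single] at h12
    have hT20 : T 2 0 = 0 := by
      have e := congrFun h02 2
      simp [Matrix.mulVec, dotProduct, Fin.sum_univ_three] at e
      nlinarith [e]
    have hT21 : T 2 1 = 0 := by
      have e := congrFun h12 2
      simp [Matrix.mulVec, dotProduct, Fin.sum_univ_three] at e
      nlinarith [e]
    refine ⟨hT20, hT21, ?_⟩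
    have h20 := h (Pi.single 2 1) (Pi.single 0 1)
    rw [hB, hB] at h20
    simp [Matrix.mulVec_single, hT20] at h20
    have hcol := hc 0
    simp [Matrix.mulVec_single] at hcol
    obtain ⟨j, hj⟩ := Function.ne_iff.mp hcol
    have e := congrFun h20 j
    simp at e hj
    have hz : (T 2 2 - 1) * T j 0 = 0 := by linarith
    rcases mul_eq_zero.mp hz with h' | h'
    · linarith
    · exact absurd h' hj
  · intro ⟨h0, h1, h2⟩ u v
    have key : ∀ w : Fin 3 → ℝ, (T.mulVec w) 2 = w 2 := by
      intro w
      simp [Matrix.mulVec, dotProduct, Fin.sum_univ_three, h0, h1, h2]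
    funext i
    simp [hB, Matrix.mulVec, dotProduct, Fin.sum_univ_three, key,
      Matrix.mulVec_sub, Matrix.mulVec_smul]
    rw [h0, h1, h2]
    ring
end

section
/- Let A be any symmetric 3×3 real matrix. Then there exists T ∈ GL(3,ℝ) such that det(T)·(T⁻¹)ᵀ A T⁻¹ is one of the six matrices: 0, diag(1,1,1), diag(1,1,−1), diag(1,1,0), diag(1,−1,0), diag(1,0,0). Equivalently, every unimodular linear Poisson structure on ℝ³, given by a quadratic function f = XᵀAX, is isomorphic to one with f ∈ {0, x²+y²+z², x²+y²−z², x²+y², x²−y², x²}. -/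
/-!
By the spectral theorem followed by a diagonal rescaling, a real symmetric matrix is congruent
(`A ↦ Sᵀ * A * S` with `S` invertible) to a diagonal matrix with entries in `{-1, 0, 1}`, in any
order of the diagonal. In dimension 3 the action `A ↦ det T • (T⁻¹)ᵀ * A * T⁻¹` with
`T = (d • S)⁻¹` sends `A` to `(d * det S)⁻¹ • Sᵀ * A * S`, so it reaches every nonzero multiple of
every matrix congruent to `A`. Up to order and a global sign, a sign pattern of length 3 is one of
the six listed ones.
-/

open Matrix

theorem Real.exists_ne_zero_mul_mul_self_eq_sign (x : ℝ) :
    ∃ p : ℝ, p ≠ 0 ∧ p * x * p = SignType.sign x := by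
  rcases eq_or_ne x 0 with rfl | hx
  · exact ⟨1, one_ne_zero, by simp⟩
  · refine ⟨(√|x|)⁻¹, by positivity, ?_⟩
    field_simp
    rw [Real.sq_sqrt (abs_nonneg x), abs_mul_sign]

namespace Matrix

section Congruence

variable {n R : Type*} [Fintype n] [DecidableEq n] [CommRing R]

def IsCongruent (A B : Matrix n n R) : Prop :=
  ∃ S : Matrix n n R, IsUnit S.det ∧ Sᵀ * A * S = B

theorem IsCongruent.trans {A B C : Matrix n n R} (hAB : A.IsCongruent B)
    (hBC : B.IsCongruent C) : A.IsCongruent C := by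
  obtain ⟨S, hS, rfl⟩ := hAB
  obtain ⟨U, hU, rfl⟩ := hBC
  refine ⟨S * U, by simpa only [det_mul] using hS.mul hU, ?_⟩
  simp only [transpose_mul, Matrix.mul_assoc]

theorem isCongruent_diagonal_comp_perm (d : n → R) (σ : Equiv.Perm n) :
    (diagonal d).IsCongruent (diagonal (d ∘ σ)) := by
  refine ⟨σ⁻¹.permMatrix R, ?_, ?_⟩
  · rw [det_permutation]
    exact (Equiv.Perm.sign σ⁻¹).isUnit.map (Int.castRingHom R)
  · rw [transpose_permMatrix, inv_inv, PEquiv.toMatrix_toPEquiv_mul,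
      PEquiv.mul_toMatrix_toPEquiv, submatrix_submatrix]
    exact submatrix_diagonal_equiv d σ

theorem isCongruent_diagonal_of_isUnit (d u : n → R) (hu : ∀ i, IsUnit (u i)) :
    (diagonal d).IsCongruent (diagonal fun i => u i * d i * u i) := by
  refine ⟨diagonal u, ?_, ?_⟩
  · rw [det_diagonal]
    exact IsUnit.prod_univ_iff.mpr hu
  · rw [diagonal_transpose, diagonal_mul_diagonal, diagonal_mul_diagonal]

end Congruence

section Sylvester

variable {n : Type*} [Fintype n] [DecidableEq n]

theorem isCongruent_diagonal_sign (d : n → ℝ) :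
    (diagonal d).IsCongruent (diagonal fun i => (SignType.sign (d i) : ℝ)) := by
  choose p hp hpd using fun i => Real.exists_ne_zero_mul_mul_self_eq_sign (d i)
  simpa only [hpd] using isCongruent_diagonal_of_isUnit d p fun i => (hp i).isUnit

theorem IsSymm.isCongruent_diagonal_eigenvalues {A : Matrix n n ℝ} (hA : A.IsSymm) :
    A.IsCongruent (diagonal (isHermitian_iff_isSymm.mpr hA).eigenvalues) := by
  set hH := isHermitian_iff_isSymm.mpr hA
  refine ⟨hH.eigenvectorUnitary, ?_, ?_⟩
  · exact (isUnit_iff_isUnit_det _).mp (Unitary.toUnits hH.eigenvectorUnitary).isUnit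
  · have h := hH.conjStarAlgAut_star_eigenvectorUnitary
    rw [Unitary.conjStarAlgAut_star_apply, star_eq_conjTranspose,
      conjTranspose_eq_transpose_of_trivial] at h
    simpa using h

theorem IsSymm.exists_isCongruent_diagonal_signType {A : Matrix n n ℝ} (hA : A.IsSymm) :
    ∃ s : n → SignType, A.IsCongruent (diagonal fun i => (s i : ℝ)) :=
  ⟨_, hA.isCongruent_diagonal_eigenvalues.trans (isCongruent_diagonal_sign _)⟩

end Sylvester

end Matrix

def signNormalForms : Finset (Fin 3 → SignType) :=
  {0, ![1, 1, 1], ![1, 1, -1], ![1, 1, 0], ![1, -1, 0], ![1, 0, 0]}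

def unimodularNormalForms : Set (Matrix (Fin 3) (Fin 3) ℝ) :=
  {0, diagonal ![1, 1, 1], diagonal ![1, 1, -1], diagonal ![1, 1, 0], diagonal ![1, -1, 0],
    diagonal ![1, 0, 0]}

theorem exists_perm_mul_comp_mem_signNormalForms (s : Fin 3 → SignType) :
    ∃ σ : Equiv.Perm (Fin 3), ∃ ε : SignType, ε ≠ 0 ∧ (fun i => ε * s (σ i)) ∈ signNormalForms := by
  revert s
  decide

theorem diagonal_cast_mem_unimodularNormalForms {v : Fin 3 → SignType}
    (hv : v ∈ signNormalForms) : (diagonal fun i => (v i : ℝ)) ∈ unimodularNormalForms := by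
  simp only [signNormalForms, Finset.mem_insert, Finset.mem_singleton] at hv
  rcases hv with rfl | rfl | rfl | rfl | rfl | rfl <;>
    simp [unimodularNormalForms, funext_iff, Fin.forall_fin_succ]

theorem exists_perm_smul_diagonal_mem_unimodularNormalForms (s : Fin 3 → SignType) :
    ∃ σ : Equiv.Perm (Fin 3), ∃ c : ℝ, c ≠ 0 ∧
      (c • diagonal fun i => (s (σ i) : ℝ)) ∈ unimodularNormalForms := by
  obtain ⟨σ, ε, hε, hmem⟩ := exists_perm_mul_comp_mem_signNormalForms s
  refine ⟨σ, ε, by cases ε <;> simp_all, ?_⟩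
  rw [← diagonal_smul]
  simpa only [Pi.smul_def, smul_eq_mul, SignType.coe_mul] using
    diagonal_cast_mem_unimodularNormalForms hmem

theorem Matrix.IsCongruent.exists_det_smul_inv_eq_smul {A B : Matrix (Fin 3) (Fin 3) ℝ}
    (h : A.IsCongruent B) {c : ℝ} (hc : c ≠ 0) :
    ∃ T : Matrix (Fin 3) (Fin 3) ℝ, IsUnit T.det ∧ T.det • ((T⁻¹)ᵀ * A * T⁻¹) = c • B := by
  obtain ⟨S, hS, rfl⟩ := h
  set d := (c * S.det)⁻¹
  have hd : d ≠ 0 := inv_ne_zero (mul_ne_zero hc hS.ne_zero)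
  have hU : IsUnit (d • S).det := by
    rw [det_smul]
    exact (hd.isUnit.pow _).mul hS
  refine ⟨(d • S)⁻¹, isUnit_nonsing_inv_det_iff.mpr hU, ?_⟩
  rw [nonsing_inv_nonsing_inv _ hU, det_nonsing_inv, Ring.inverse_eq_inv', det_smul,
    transpose_smul, smul_mul_assoc, mul_smul_comm, smul_mul_assoc, smul_smul, smul_smul,
    Fintype.card_fin]
  congr 1
  field_simp
  simp only [d]
  field_simp [hS.ne_zero]

/-- Every symmetric 3×3 real matrix `A` can be brought, by some
`T ∈ GL(3,ℝ)` acting as `A ↦ det(T)·(T⁻¹)ᵀ A T⁻¹`, to one of the six matrices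
`0, diag(1,1,1), diag(1,1,−1), diag(1,1,0), diag(1,−1,0), diag(1,0,0)`;
i.e. every unimodular linear Poisson structure on `ℝ³` is isomorphic to one with
`f ∈ {0, x²+y²+z², x²+y²−z², x²+y², x²−y², x²}`. -/
theorem unimodular_classification
    (A : Matrix (Fin 3) (Fin 3) ℝ) (hA : A.IsSymm) :
    ∃ T : Matrix (Fin 3) (Fin 3) ℝ, IsUnit T.det ∧
      (T.det • ((T⁻¹)ᵀ * A * T⁻¹) = 0 ∨
       T.det • ((T⁻¹)ᵀ * A * T⁻¹) = Matrix.diagonal ![1, 1, 1] ∨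
       T.det • ((T⁻¹)ᵀ * A * T⁻¹) = Matrix.diagonal ![1, 1, -1] ∨
       T.det • ((T⁻¹)ᵀ * A * T⁻¹) = Matrix.diagonal ![1, 1, 0] ∨
       T.det • ((T⁻¹)ᵀ * A * T⁻¹) = Matrix.diagonal ![1, -1, 0] ∨
       T.det • ((T⁻¹)ᵀ * A * T⁻¹) = Matrix.diagonal ![1, 0, 0]) := by
  obtain ⟨s, hs⟩ := hA.exists_isCongruent_diagonal_signType
  obtain ⟨σ, c, hc, hmem⟩ := exists_perm_smul_diagonal_mem_unimodularNormalForms s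
  obtain ⟨T, hT, hTA⟩ :=
    (hs.trans (isCongruent_diagonal_comp_perm _ σ)).exists_det_smul_inv_eq_smul hc
  refine ⟨T, hT, ?_⟩
  rw [hTA]
  exact hmem
end

section
/- Let k ∈ ℝ³ be nonzero and A a symmetric 3×3 real matrix with Ak = 0. Then there exists T ∈ GL(3,ℝ) such that Tk = (0,0,1)ᵀ and det(T)·(T⁻¹)ᵀ A T⁻¹ is one of: the zero matrix; a·diag(1,1,0) for some a > 0; a·diag(1,−1,0) for some a > 0; or diag(1,0,0). Equivalently, every non-unimodular linear Poisson structure on ℝ³ is isomorphic to one with compatible pair k = (0,0,1)ᵀ and f ∈ {0, a(x²+y²) (a>0), a(x²−y²) (a>0), x²}. -/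
/-!
Send `k` to `e₃` by any invertible matrix. The transformed form is still symmetric and kills `e₃`,
so it is a binary form `p x² + 2q xy + r y²`, on which the matrices fixing `e₃` act through their
upper-left block `H` by `f ↦ (det H)⁻¹ · f ∘ H`. Completing the square (after `x ↔ y` or
`(x, y) ↦ (x + y, y - x)` when `p = 0`) makes it diagonal, `diag(p, s)`. Because of the determinant
twist, `y ↦ c y` turns `diag(p, s)` into `diag(p / c, c s)`: the product `p s` is an invariant,
and `c = p / √|p s|` reaches `√|p s| · diag(1, ±1)`, while `c = p` reaches `diag(1, 0)` if `s = 0`.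
-/

open Matrix

variable {n R : Type*} [Fintype n] [DecidableEq n] [CommRing R]

/-- Isomorphism of compatible pairs `(k, A) ≅ (k', A')`, where `A` is the matrix of the quadratic
function `f = Xᵀ A X`. -/
def PairIso (k : n → R) (A : Matrix n n R) (k' : n → R) (A' : Matrix n n R) : Prop :=
  ∃ T : Matrix n n R, IsUnit T.det ∧ T *ᵥ k = k' ∧ T.det • ((T⁻¹)ᵀ * A * T⁻¹) = A'

namespace PairIso

variable {k k' k'' : n → R} {A A' A'' : Matrix n n R}

theorem refl (k : n → R) (A : Matrix n n R) : PairIso k A k A :=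
  ⟨1, by simp, by simp, by simp⟩

theorem trans (h : PairIso k A k' A') (h' : PairIso k' A' k'' A'') : PairIso k A k'' A'' := by
  obtain ⟨T, hT, rfl, rfl⟩ := h
  obtain ⟨T', hT', rfl, rfl⟩ := h'
  refine ⟨T' * T, by rw [det_mul]; exact hT'.mul hT, (mulVec_mulVec _ _ _).symm, ?_⟩
  rw [Matrix.mul_inv_rev, transpose_mul, det_mul, mul_smul, Matrix.mul_smul, Matrix.smul_mul]
  simp only [Matrix.mul_assoc]

theorem isSymm (h : PairIso k A k' A') (hA : A.IsSymm) : A'.IsSymm := by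
  obtain ⟨T, -, -, rfl⟩ := h
  simp only [IsSymm, transpose_smul, transpose_mul, transpose_transpose, hA.eq, Matrix.mul_assoc]

theorem mulVec_eq_zero (h : PairIso k A k' A') (hAk : A *ᵥ k = 0) : A' *ᵥ k' = 0 := by
  obtain ⟨T, hT, rfl, rfl⟩ := h
  rw [smul_mulVec, mulVec_mulVec, Matrix.mul_assoc, Matrix.mul_assoc, nonsing_inv_mul _ hT,
    Matrix.mul_one, ← mulVec_mulVec, hAk, mulVec_zero, smul_zero]

end PairIso

theorem pairIso_of_transpose_mul_mul {k k' : n → R} {A A' : Matrix n n R} {H : Matrix n n R}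
    (hH : IsUnit H.det) (hk : H *ᵥ k' = k) (hA : Hᵀ * A * H = H.det • A') :
    PairIso k A k' A' := by
  refine ⟨H⁻¹, isUnit_nonsing_inv_det _ hH, ?_, ?_⟩
  · rw [← hk, mulVec_mulVec, nonsing_inv_mul _ hH, one_mulVec]
  · rw [nonsing_inv_nonsing_inv _ hH, hA, smul_smul, det_nonsing_inv_mul_det _ hH, one_smul]

theorem exists_isUnit_det_mulVec_single_eq {K : Type*} [Field K] {v : n → K} (hv : v ≠ 0)
    (j : n) : ∃ H : Matrix n n K, IsUnit H.det ∧ H *ᵥ Pi.single j 1 = v := by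
  obtain ⟨i, hi⟩ := Function.ne_iff.mp hv
  refine ⟨(1 : Matrix n n K).updateCol i v * (Equiv.swap i j).permMatrix K, ?_, ?_⟩
  · rw [det_mul, det_permutation, ← cramer_apply, cramer_one]
    exact (isUnit_iff_ne_zero.mpr hi).mul ((Equiv.Perm.sign _).isUnit.map (Int.castRingHom K))
  · rw [← mulVec_mulVec, permMatrix_mulVec, Pi.single_comp_equiv, mulVec_single_one]
    ext l
    simp

theorem exists_pairIso_single_one {K : Type*} [Field K] {k : n → K} (hk : k ≠ 0)
    (A : Matrix n n K) (j : n) : ∃ A', PairIso k A (Pi.single j 1) A' := by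
  obtain ⟨H, hH, hHk⟩ := exists_isUnit_det_mulVec_single_eq hk j
  exact ⟨H.det⁻¹ • (Hᵀ * A * H), pairIso_of_transpose_mul_mul hH hHk
    (by rw [smul_smul, mul_inv_cancel₀ hH.ne_zero, one_smul])⟩

local notation "e₃" => (![0, 0, 1] : Fin 3 → ℝ)

/-- The matrix of `p x² + 2 q x y + r y²`. -/
def planarForm (p q r : ℝ) : Matrix (Fin 3) (Fin 3) ℝ := !![p, q, 0; q, r, 0; 0, 0, 0]

def IsNormalForm (N : Matrix (Fin 3) (Fin 3) ℝ) : Prop :=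
  N = 0 ∨ (∃ a : ℝ, 0 < a ∧ N = a • diagonal ![1, 1, 0]) ∨
    (∃ a : ℝ, 0 < a ∧ N = a • diagonal ![1, -1, 0]) ∨ N = diagonal ![1, 0, 0]

theorem eq_planarForm_of_isSymm {A : Matrix (Fin 3) (Fin 3) ℝ} (hA : A.IsSymm)
    (hAe : A *ᵥ e₃ = 0) : A = planarForm (A 0 0) (A 0 1) (A 1 1) := by
  have hcol : ∀ i, A i 2 = 0 := fun i => by
    simpa [mulVec, dotProduct, Fin.sum_univ_three] using congrFun hAe i
  ext i j
  fin_cases i <;> fin_cases j <;> simp [planarForm, hcol, ← hA.apply 2, hA.apply 1 0]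

theorem planarForm_zero_zero_zero : planarForm 0 0 0 = 0 := by
  ext i j; fin_cases i <;> fin_cases j <;> rfl

theorem pairIso_of_planar {X Y : Matrix (Fin 3) (Fin 3) ℝ} {a b c d : ℝ}
    (hdet : a * d - b * c ≠ 0)
    (h : !![a, c, 0; b, d, 0; 0, 0, 1] * X * !![a, b, 0; c, d, 0; 0, 0, 1] =
      (a * d - b * c) • Y) : PairIso e₃ X e₃ Y := by
  have hdet' : (!![a, b, 0; c, d, 0; 0, 0, 1] : Matrix (Fin 3) (Fin 3) ℝ).det = a * d - b * c := by
    simp [det_fin_three]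
  refine pairIso_of_transpose_mul_mul (H := !![a, b, 0; c, d, 0; 0, 0, 1]) ?_ ?_ ?_
  · rw [hdet']; exact isUnit_iff_ne_zero.mpr hdet
  · ext i; fin_cases i <;> simp
  · rw [hdet', ← h]; congr 2; ext i j; fin_cases i <;> fin_cases j <;> rfl

theorem pairIso_shear {p : ℝ} (hp : p ≠ 0) (q r : ℝ) :
    PairIso e₃ (planarForm p q r) e₃ (diagonal ![p, r - q ^ 2 / p, 0]) := by
  refine pairIso_of_planar (a := 1) (b := -q / p) (c := 0) (d := 1) (by norm_num) ?_
  ext i j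
  fin_cases i <;> fin_cases j <;> simp [planarForm, mul_apply, Fin.sum_univ_three] <;>
    field_simp <;> ring

theorem pairIso_swap (p q r : ℝ) :
    PairIso e₃ (planarForm p q r) e₃ (planarForm (-r) (-q) (-p)) := by
  refine pairIso_of_planar (a := 0) (b := 1) (c := 1) (d := 0) (by norm_num) ?_
  ext i j
  fin_cases i <;> fin_cases j <;> simp [planarForm, mul_apply, Fin.sum_univ_three]

theorem pairIso_rotate (q : ℝ) :
    PairIso e₃ (planarForm 0 q 0) e₃ (diagonal ![-q, q, 0]) := by
  refine pairIso_of_planar (a := 1) (b := 1) (c := -1) (d := 1) (by norm_num) ?_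
  ext i j
  fin_cases i <;> fin_cases j <;> simp [planarForm, mul_apply, Fin.sum_univ_three] <;> ring

theorem pairIso_diagonal_of_mul {p s p' s' c : ℝ} (hc : c ≠ 0) (hp : p = c * p')
    (hs : c * s = s') : PairIso e₃ (diagonal ![p, s, 0]) e₃ (diagonal ![p', s', 0]) := by
  refine pairIso_of_planar (a := 1) (b := 0) (c := 0) (d := c) (by simpa using hc) ?_
  subst hp hs
  ext i j
  fin_cases i <;> fin_cases j <;> simp [mul_apply, Fin.sum_univ_three, vecMul_diagonal]
  ring

def HasNormalForm (X : Matrix (Fin 3) (Fin 3) ℝ) : Prop :=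
  ∃ N, IsNormalForm N ∧ PairIso e₃ X e₃ N

theorem PairIso.hasNormalForm {X Y : Matrix (Fin 3) (Fin 3) ℝ} (h : PairIso e₃ X e₃ Y)
    (hY : HasNormalForm Y) : HasNormalForm X :=
  let ⟨N, hN, hYN⟩ := hY
  ⟨N, hN, h.trans hYN⟩

theorem smul_diagonal_one_zero (a ε : ℝ) : a • diagonal ![1, ε, 0] = diagonal ![a, a * ε, 0] := by
  rw [← diagonal_smul]; simp

theorem hasNormalForm_diagonal {p : ℝ} (hp : p ≠ 0) (s : ℝ) :
    HasNormalForm (diagonal ![p, s, 0]) := by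
  rcases eq_or_ne s 0 with rfl | hs
  · exact ⟨_, Or.inr (Or.inr (Or.inr rfl)),
      pairIso_diagonal_of_mul hp (mul_one p).symm (mul_zero p)⟩
  set a := √|p * s|
  have ha : 0 < a := Real.sqrt_pos.mpr (abs_pos.mpr (mul_ne_zero hp hs))
  have ha2 : a * a = |p * s| := Real.mul_self_sqrt (abs_nonneg _)
  have hc : p / a ≠ 0 := div_ne_zero hp ha.ne'
  have hpa : p = p / a * a := (div_mul_cancel₀ p ha.ne').symm
  rcases (mul_ne_zero hp hs).lt_or_gt with hps | hps
  · refine ⟨a • diagonal ![1, -1, 0], Or.inr (Or.inr (Or.inl ⟨a, ha, rfl⟩)), ?_⟩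
    rw [smul_diagonal_one_zero]
    refine pairIso_diagonal_of_mul hc hpa ?_
    rw [abs_of_neg hps] at ha2
    field_simp
    linarith
  · refine ⟨a • diagonal ![1, 1, 0], Or.inr (Or.inl ⟨a, ha, rfl⟩), ?_⟩
    rw [smul_diagonal_one_zero]
    refine pairIso_diagonal_of_mul hc hpa ?_
    rw [abs_of_pos hps] at ha2
    field_simp
    linarith

theorem hasNormalForm_planarForm (p q r : ℝ) : HasNormalForm (planarForm p q r) := by
  rcases ne_or_eq p 0 with hp | rfl
  · exact (pairIso_shear hp q r).hasNormalForm (hasNormalForm_diagonal hp _)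
  rcases ne_or_eq r 0 with hr | rfl
  · have hr' : -r ≠ 0 := neg_ne_zero.mpr hr
    exact ((pairIso_swap 0 q r).trans (pairIso_shear hr' _ _)).hasNormalForm
      (hasNormalForm_diagonal hr' _)
  rcases ne_or_eq q 0 with hq | rfl
  · exact (pairIso_rotate q).hasNormalForm (hasNormalForm_diagonal (neg_ne_zero.mpr hq) q)
  · exact ⟨0, Or.inl rfl, planarForm_zero_zero_zero ▸ PairIso.refl _ _⟩

/-- For `k ∈ ℝ³` nonzero and `A` a symmetric 3×3 real matrix with
`Ak = 0`, there is `T ∈ GL(3,ℝ)` with `Tk = (0,0,1)ᵀ` such that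
`det(T)·(T⁻¹)ᵀ A T⁻¹` is one of `0`, `a·diag(1,1,0)` (`a > 0`), `a·diag(1,−1,0)`
(`a > 0`), or `diag(1,0,0)`; i.e. every non-unimodular linear Poisson structure on
`ℝ³` is isomorphic to one with compatible pair `k = (0,0,1)ᵀ` and
`f ∈ {0, a(x²+y²), a(x²−y²), x²}`. -/
theorem nonunimodular_classification
    (k : Fin 3 → ℝ) (hk : k ≠ 0)
    (A : Matrix (Fin 3) (Fin 3) ℝ) (hA : A.IsSymm) (hAk : A.mulVec k = 0) :
    ∃ T : Matrix (Fin 3) (Fin 3) ℝ, IsUnit T.det ∧ T.mulVec k = ![0, 0, 1] ∧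
      (T.det • ((T⁻¹)ᵀ * A * T⁻¹) = 0 ∨
       (∃ a : ℝ, 0 < a ∧ T.det • ((T⁻¹)ᵀ * A * T⁻¹) = a • Matrix.diagonal ![1, 1, 0]) ∨
       (∃ a : ℝ, 0 < a ∧ T.det • ((T⁻¹)ᵀ * A * T⁻¹) = a • Matrix.diagonal ![1, -1, 0]) ∨
       T.det • ((T⁻¹)ᵀ * A * T⁻¹) = Matrix.diagonal ![1, 0, 0]) := by
  obtain ⟨B, hAB⟩ := exists_pairIso_single_one hk A 2
  have he : (Pi.single 2 1 : Fin 3 → ℝ) = e₃ := by ext i; fin_cases i <;> rfl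
  rw [he] at hAB
  have hB := eq_planarForm_of_isSymm (hAB.isSymm hA) (hAB.mulVec_eq_zero hAk)
  obtain ⟨N, hN, hBN⟩ := hasNormalForm_planarForm (B 0 0) (B 0 1) (B 1 1)
  rw [← hB] at hBN
  obtain ⟨T, hT, hTk, hTA⟩ := hAB.trans hBN
  exact ⟨T, hT, hTk, hTA ▸ hN⟩
end

section
/- Let A be a symmetric 3×3 real matrix, K ∈ M₃(ℝ) with tr(K) = 0, and F ∈ ℝ[x₁,x₂,x₃] a homogeneous cubic polynomial with (KX)·∇F = 0. Then the bracket {·,·}_{0,A,K,F} (the case k = 0 of the deformed bracket) satisfies the Jacobi identity if and only if AK + KᵀA = 0, i.e. if and only if (KX)·∇f = 0 for f = XᵀAX. -/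
open MvPolynomial Matrix

noncomputable section
set_option maxHeartbeats 4000000

/-- The Euler operator `E(g) = Σᵢ xᵢ ∂g/∂xᵢ`. -/
def euler (g : MvPolynomial (Fin 3) ℝ) : MvPolynomial (Fin 3) ℝ :=
  ∑ i : Fin 3, X i * pderiv i g

/-- `k·∇g` for a constant vector `k ∈ ℝ³`. -/
def dotGradConst (k : Fin 3 → ℝ) (g : MvPolynomial (Fin 3) ℝ) : MvPolynomial (Fin 3) ℝ :=
  ∑ i : Fin 3, C (k i) * pderiv i g

/-- `(KX)·∇g` for a matrix `K`. -/
def dotGradLin (K : Matrix (Fin 3) (Fin 3) ℝ) (g : MvPolynomial (Fin 3) ℝ) :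
    MvPolynomial (Fin 3) ℝ :=
  ∑ i : Fin 3, (∑ j : Fin 3, C (K i j) * X j) * pderiv i g

/-- The quadratic form `XᵀMX` as a polynomial. -/
def quadForm (M : Matrix (Fin 3) (Fin 3) ℝ) : MvPolynomial (Fin 3) ℝ :=
  ∑ i : Fin 3, ∑ j : Fin 3, C (M i j) * X i * X j

/-- `det[∇a, ∇b, ∇c]`: the determinant of the 3×3 matrix whose columns are the
gradients of `a`, `b`, `c`. -/
def gradDet (a b c : MvPolynomial (Fin 3) ℝ) : MvPolynomial (Fin 3) ℝ :=
  (Matrix.of fun i j => ![fun i' => pderiv i' a, fun i' => pderiv i' b,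
    fun i' => pderiv i' c] j i).det

/-- The bracket `{g,h}_{k,A,K,F}` of the bivector field `π_{k,f} + π_{K,F}`
(with `f = XᵀAX`): `det[∇(f+F), ∇g, ∇h] + (1/2)(E(g)(k·∇h) − (k·∇g)E(h))
+ (1/3)(E(g)((KX)·∇h) − ((KX)·∇g)E(h))`. -/
def pbracket (k : Fin 3 → ℝ) (A K : Matrix (Fin 3) (Fin 3) ℝ)
    (F : MvPolynomial (Fin 3) ℝ) (g h : MvPolynomial (Fin 3) ℝ) : MvPolynomial (Fin 3) ℝ :=
  gradDet (quadForm A + F) g h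
    + C (1 / 2 : ℝ) * (euler g * dotGradConst k h - dotGradConst k g * euler h)
    + C (1 / 3 : ℝ) * (euler g * dotGradLin K h - dotGradLin K g * euler h)

-- ===== auxiliary development =====

lemma pd_comm (i j : Fin 3) (f : MvPolynomial (Fin 3) ℝ) :
    pderiv i (pderiv j f) = pderiv j (pderiv i f) := by
  induction f using MvPolynomial.induction_on with
  | C a => simp
  | add p q hp hq => simp [hp, hq]
  | mul_X p n ih => simp [pderiv_mul, ih, Pi.single_apply]; split_ifs <;> simp_all <;> ring

lemma pd10 (g : MvPolynomial (Fin 3) ℝ) :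
    pderiv (1 : Fin 3) (pderiv (0 : Fin 3) g) = pderiv 0 (pderiv 1 g) := pd_comm _ _ _
lemma pd20 (g : MvPolynomial (Fin 3) ℝ) :
    pderiv (2 : Fin 3) (pderiv (0 : Fin 3) g) = pderiv 0 (pderiv 2 g) := pd_comm _ _ _
lemma pd21 (g : MvPolynomial (Fin 3) ℝ) :
    pderiv (2 : Fin 3) (pderiv (1 : Fin 3) g) = pderiv 1 (pderiv 2 g) := pd_comm _ _ _

/-- linear form (KX)_i -/
def LF (K : Matrix (Fin 3) (Fin 3) ℝ) (i : Fin 3) : MvPolynomial (Fin 3) ℝ :=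
  ∑ j : Fin 3, C (K i j) * X j

def P01 (φ : MvPolynomial (Fin 3) ℝ) (K : Matrix (Fin 3) (Fin 3) ℝ) : MvPolynomial (Fin 3) ℝ :=
  pderiv 2 φ + C (1/3 : ℝ) * (X 0 * LF K 1 - LF K 0 * X 1)
def P02 (φ : MvPolynomial (Fin 3) ℝ) (K : Matrix (Fin 3) (Fin 3) ℝ) : MvPolynomial (Fin 3) ℝ :=
  - pderiv 1 φ + C (1/3 : ℝ) * (X 0 * LF K 2 - LF K 0 * X 2)
def P12 (φ : MvPolynomial (Fin 3) ℝ) (K : Matrix (Fin 3) (Fin 3) ℝ) : MvPolynomial (Fin 3) ℝ :=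
  pderiv 0 φ + C (1/3 : ℝ) * (X 1 * LF K 2 - LF K 1 * X 2)

def brr (p01 p02 p12 g h : MvPolynomial (Fin 3) ℝ) : MvPolynomial (Fin 3) ℝ :=
    p01 * (pderiv 0 g * pderiv 1 h - pderiv 1 g * pderiv 0 h)
  + p02 * (pderiv 0 g * pderiv 2 h - pderiv 2 g * pderiv 0 h)
  + p12 * (pderiv 1 g * pderiv 2 h - pderiv 2 g * pderiv 1 h)

def Tdef (p01 p02 p12 : MvPolynomial (Fin 3) ℝ) : MvPolynomial (Fin 3) ℝ :=
  - p01 * pderiv 0 p02 + p02 * pderiv 0 p01 - p01 * pderiv 1 p12 + p12 * pderiv 1 p01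
  - p02 * pderiv 2 p12 + p12 * pderiv 2 p02

lemma gradDet_expand (a b c : MvPolynomial (Fin 3) ℝ) : gradDet a b c =
    pderiv 0 a * (pderiv 1 b * pderiv 2 c - pderiv 2 b * pderiv 1 c)
  - pderiv 1 a * (pderiv 0 b * pderiv 2 c - pderiv 2 b * pderiv 0 c)
  + pderiv 2 a * (pderiv 0 b * pderiv 1 c - pderiv 1 b * pderiv 0 c) := by
  simp [gradDet, Matrix.det_fin_three]; ring

lemma pbracket_eq (A K : Matrix (Fin 3) (Fin 3) ℝ) (F g h : MvPolynomial (Fin 3) ℝ) :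
    pbracket 0 A K F g h =
      brr (P01 (quadForm A + F) K) (P02 (quadForm A + F) K) (P12 (quadForm A + F) K) g h := by
  simp only [pbracket, brr, P01, P02, P12, LF, euler, dotGradConst, dotGradLin,
    gradDet_expand, Fin.sum_univ_three, Pi.zero_apply, map_zero, zero_mul,
    add_zero, zero_add]
  ring

set_option maxHeartbeats 4000000 in
lemma master (p01 p02 p12 g h l : MvPolynomial (Fin 3) ℝ) :
    brr p01 p02 p12 (brr p01 p02 p12 g h) l
  + brr p01 p02 p12 (brr p01 p02 p12 h l) g
  + brr p01 p02 p12 (brr p01 p02 p12 l g) h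
  = Tdef p01 p02 p12 * gradDet g h l := by
  simp only [brr, Tdef, gradDet_expand, map_add, map_sub, pderiv_mul, pd10, pd20, pd21]
  ring

lemma gradDet_X : gradDet (X 0) (X 1) (X 2) = (1 : MvPolynomial (Fin 3) ℝ) := by
  simp [gradDet, Matrix.det_fin_three, pderiv_X, Pi.single_apply]

lemma Tval (φ : MvPolynomial (Fin 3) ℝ) (K : Matrix (Fin 3) (Fin 3) ℝ) :
    Tdef (P01 φ K) (P02 φ K) (P12 φ K)
      = C (1/3 : ℝ) * (C K.trace * euler φ) - 3 * (C (1/3 : ℝ) * dotGradLin K φ) := by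
  have ht : K.trace = K 0 0 + K 1 1 + K 2 2 := by
    simp [Matrix.trace, Fin.sum_univ_three]
  simp only [Tdef, P01, P02, P12, LF, dotGradLin, euler, ht, map_add, map_sub, map_neg,
    pderiv_mul, pderiv_C, pderiv_X, Pi.single_apply, Fin.sum_univ_three, pd10, pd20, pd21]
  simp only [Fin.reduceEq, if_true, if_false, reduceIte]
  ring

lemma dgl_add (K : Matrix (Fin 3) (Fin 3) ℝ) (a b : MvPolynomial (Fin 3) ℝ) :
    dotGradLin K (a + b) = dotGradLin K a + dotGradLin K b := by
  simp [dotGradLin, map_add, mul_add, Finset.sum_add_distrib]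

lemma dgl_quad (A K : Matrix (Fin 3) (Fin 3) ℝ) (hA : A.IsSymm) :
    dotGradLin K (quadForm A) = quadForm (A * K + Kᵀ * A) := by
  have h10 : A 1 0 = A 0 1 := hA.apply 0 1
  have h20 : A 2 0 = A 0 2 := hA.apply 0 2
  have h21 : A 2 1 = A 1 2 := hA.apply 1 2
  simp only [dotGradLin, quadForm, Fin.sum_univ_three, Matrix.add_apply, Matrix.mul_apply,
    Matrix.transpose_apply, map_add, _root_.map_mul, pderiv_mul, pderiv_C, pderiv_X,
    Pi.single_apply, Fin.reduceEq, reduceIte, h10, h20, h21, zero_mul, mul_zero,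
    add_zero, zero_add, mul_one, if_true, if_false]
  ring

lemma quad_zero (M : Matrix (Fin 3) (Fin 3) ℝ) (hM : M.IsSymm) (h : quadForm M = 0) :
    M = 0 := by
  have key : ∀ v : Fin 3 → ℝ, eval v (quadForm M) = 0 := by intro v; rw [h]; simp
  have e1 := key ![1,0,0]
  have e2 := key ![0,1,0]
  have e3 := key ![0,0,1]
  have e4 := key ![1,1,0]
  have e5 := key ![1,0,1]
  have e6 := key ![0,1,1]
  simp [quadForm, Fin.sum_univ_three] at e1 e2 e3 e4 e5 e6
  have h10 : M 1 0 = M 0 1 := hM.apply 0 1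
  have h20 : M 2 0 = M 0 2 := hM.apply 0 2
  have h21 : M 2 1 = M 1 2 := hM.apply 1 2
  ext i j
  fin_cases i <;> fin_cases j <;> simp [Matrix.zero_apply] <;> linarith

lemma symm_comb (A K : Matrix (Fin 3) (Fin 3) ℝ) (hA : A.IsSymm) :
    (A * K + Kᵀ * A).IsSymm := by
  unfold Matrix.IsSymm
  rw [transpose_add, transpose_mul, transpose_mul, transpose_transpose, hA.eq, add_comm]

lemma quadForm_zero : quadForm (0 : Matrix (Fin 3) (Fin 3) ℝ) = 0 := by
  simp [quadForm]


/-- In the unimodular case `k = 0`, the deformed bracket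
`{·,·}_{0,A,K,F}` satisfies the Jacobi identity if and only if `AK + KᵀA = 0`,
i.e. if and only if `(KX)·∇f = 0` for `f = XᵀAX`. -/
theorem quadratic_deformation_criterion_unimodular
    (A : Matrix (Fin 3) (Fin 3) ℝ) (hA : A.IsSymm)
    (K : Matrix (Fin 3) (Fin 3) ℝ) (hK : K.trace = 0)
    (F : MvPolynomial (Fin 3) ℝ) (hF : F.IsHomogeneous 3) (hKF : dotGradLin K F = 0) :
    ((∀ g h l, pbracket 0 A K F (pbracket 0 A K F g h) l
             + pbracket 0 A K F (pbracket 0 A K F h l) g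
             + pbracket 0 A K F (pbracket 0 A K F l g) h = 0) ↔
        A * K + Kᵀ * A = 0) ∧
    (A * K + Kᵀ * A = 0 ↔ dotGradLin K (quadForm A) = 0) := by
  have key : ∀ g h l, pbracket 0 A K F (pbracket 0 A K F g h) l
           + pbracket 0 A K F (pbracket 0 A K F h l) g
           + pbracket 0 A K F (pbracket 0 A K F l g) h
      = Tdef (P01 (quadForm A + F) K) (P02 (quadForm A + F) K) (P12 (quadForm A + F) K)
          * gradDet g h l := by
    intro g h l
    simp only [pbracket_eq]
    exact master _ _ _ _ _ _
  have hT : Tdef (P01 (quadForm A + F) K) (P02 (quadForm A + F) K) (P12 (quadForm A + F) K)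
      = - dotGradLin K (quadForm A) := by
    rw [Tval, hK]
    simp only [map_zero, zero_mul, mul_zero, zero_sub]
    rw [dgl_add, hKF, add_zero]
    have h31 : (3 : MvPolynomial (Fin 3) ℝ) * C (1/3 : ℝ) = 1 := by
      rw [show (3 : MvPolynomial (Fin 3) ℝ) = C (3:ℝ) from (map_ofNat C 3).symm, ← _root_.map_mul]
      norm_num
    rw [show (3 : MvPolynomial (Fin 3) ℝ) * (C (1/3:ℝ) * dotGradLin K (quadForm A))
        = ((3:MvPolynomial (Fin 3) ℝ) * C (1/3:ℝ)) * dotGradLin K (quadForm A) by ring,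
      h31, one_mul]
  have hiff2 : A * K + Kᵀ * A = 0 ↔ dotGradLin K (quadForm A) = 0 := by
    constructor
    · intro hM; rw [dgl_quad A K hA, hM, quadForm_zero]
    · intro h0; exact quad_zero _ (symm_comb A K hA) (by rw [← dgl_quad A K hA]; exact h0)
  refine ⟨⟨?_, ?_⟩, hiff2⟩
  · intro hJ
    have h3 := hJ (X 0) (X 1) (X 2)
    rw [key, gradDet_X, mul_one, hT, neg_eq_zero] at h3
    exact hiff2.mpr h3
  · intro hM g h l
    rw [key, hT, hiff2.mp hM, neg_zero, zero_mul]

end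
end

section
/- Let k ∈ ℝ³ and A be a symmetric 3×3 real matrix with Ak = 0, and for i = 1,2 let Kᵢ ∈ M₃(ℝ) with tr(Kᵢ) = 0 and Fᵢ be homogeneous cubic polynomials with (KᵢX)·∇Fᵢ = 0, such that both brackets {·,·}ᵢ := {·,·}_{k,A,Kᵢ,Fᵢ} satisfy the Jacobi identity. Then for T ∈ GL(3,ℝ), the equality {g∘T, h∘T}₁ = ({g,h}₂)∘T holds for all polynomials g,h (i.e., T pushes the first Poisson structure forward to the second) if and only if Tk = k, TᵀAT = det(T)·A, K₂ = T K₁ T⁻¹, and F₂∘T = det(T)·F₁. -/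
open MvPolynomial Matrix

noncomputable section

/-- `g∘M`: the polynomial `X ↦ g(MX)`. -/
def polyComp (M : Matrix (Fin 3) (Fin 3) ℝ) (g : MvPolynomial (Fin 3) ℝ) :
    MvPolynomial (Fin 3) ℝ :=
  aeval (fun i => ∑ j : Fin 3, C (M i j) * X j) g


/-!
Composing with `T` transports the bracket with data `(k, A, K, F)` to the bracket with data
`(Tk, A', TKT⁻¹, F')`, where `TᵀA'T = det T • A` and `F'∘T = det T • F`: the factor `det T` is
the Jacobian picked up by `det[∇·, ∇·, ∇·]`. Conversely the data are determined by the brackets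
of the coordinate functions. Their cyclic sum `Σ xₗ{xᵢ,xⱼ}` is `E(f + F) = 2f + 3F`, which
separates `A` from `F` by degree; what is left of `{xᵢ,xⱼ}` is
`½(xᵢkⱼ - kᵢxⱼ) + ⅓(xᵢ(KX)ⱼ - (KX)ᵢxⱼ)`, which determines `k`, and `K` up to a multiple of the
identity that `tr K = 0` kills. As the bracket is linear in the data, this gives uniqueness.
-/

lemma quadForm_smul (r : ℝ) (M : Matrix (Fin 3) (Fin 3) ℝ) :
    quadForm (r • M) = C r * quadForm M := by
  simp only [quadForm, Finset.mul_sum, Matrix.smul_apply, smul_eq_mul, C_mul, mul_assoc]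

lemma gradDet_C_mul_left (r : ℝ) (a b c : MvPolynomial (Fin 3) ℝ) :
    gradDet (C r * a) b c = C r * gradDet a b c := by
  simp only [gradDet, det_fin_three, of_apply, cons_val_zero, cons_val_one, cons_val_two,
    head_cons, tail_cons, pderiv_C_mul]
  ring

section Transport

variable (T : Matrix (Fin 3) (Fin 3) ℝ)

@[simp] lemma polyComp_C (r : ℝ) : polyComp T (C r) = C r := aeval_C _ r

@[simp] lemma polyComp_X (i : Fin 3) : polyComp T (X i) = ∑ j : Fin 3, C (T i j) * X j :=
  aeval_X _ i

@[simp] lemma polyComp_zero : polyComp T 0 = 0 := map_zero _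

@[simp] lemma polyComp_one : polyComp T 1 = 1 := map_one _

@[simp] lemma polyComp_add (g h : MvPolynomial (Fin 3) ℝ) :
    polyComp T (g + h) = polyComp T g + polyComp T h := map_add _ g h

@[simp] lemma polyComp_sub (g h : MvPolynomial (Fin 3) ℝ) :
    polyComp T (g - h) = polyComp T g - polyComp T h := map_sub _ g h

@[simp] lemma polyComp_mul (g h : MvPolynomial (Fin 3) ℝ) :
    polyComp T (g * h) = polyComp T g * polyComp T h := map_mul _ g h

@[simp] lemma polyComp_sum (s : Finset (Fin 3)) (g : Fin 3 → MvPolynomial (Fin 3) ℝ) :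
    polyComp T (∑ i ∈ s, g i) = ∑ i ∈ s, polyComp T (g i) := map_sum _ g s

lemma polyComp_polyComp (S : Matrix (Fin 3) (Fin 3) ℝ) (g : MvPolynomial (Fin 3) ℝ) :
    polyComp T (polyComp S g) = polyComp (S * T) g := by
  induction g using MvPolynomial.induction_on with
  | C a => simp
  | add p q hp hq => simp [hp, hq]
  | mul_X p n hp =>
    simp only [polyComp_mul, hp, polyComp_X, Matrix.mul_apply, Fin.sum_univ_three,
      map_add, C_mul, polyComp_add, polyComp_C]
    ring

lemma polyComp_one_matrix (g : MvPolynomial (Fin 3) ℝ) : polyComp 1 g = g := by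
  induction g using MvPolynomial.induction_on with
  | C a => simp
  | add p q hp hq => simp [hp, hq]
  | mul_X p n hp => simp [hp, Matrix.one_apply]

lemma pderiv_polyComp (i : Fin 3) (g : MvPolynomial (Fin 3) ℝ) :
    pderiv i (polyComp T g) = ∑ j : Fin 3, C (T j i) * polyComp T (pderiv j g) := by
  induction g using MvPolynomial.induction_on with
  | C a => simp
  | add p q hp hq => simp [hp, hq, mul_add, Finset.sum_add_distrib]
  | mul_X p n hp =>
    simp only [polyComp_mul, pderiv_mul, hp, polyComp_X, pderiv_X, Fin.sum_univ_three,
      polyComp_add]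
    fin_cases n <;> fin_cases i <;> simp <;> ring

lemma euler_polyComp (g : MvPolynomial (Fin 3) ℝ) :
    euler (polyComp T g) = polyComp T (euler g) := by
  simp only [euler, Fin.sum_univ_three, pderiv_polyComp, polyComp_add, polyComp_mul, polyComp_X]
  ring

lemma dotGradConst_polyComp (k : Fin 3 → ℝ) (g : MvPolynomial (Fin 3) ℝ) :
    dotGradConst k (polyComp T g) = polyComp T (dotGradConst (T *ᵥ k) g) := by
  simp only [dotGradConst, Fin.sum_univ_three, pderiv_polyComp, polyComp_add, polyComp_mul,
    polyComp_C, mulVec, dotProduct, map_add, C_mul]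
  ring

lemma polyComp_sum_C_mul_X (M : Matrix (Fin 3) (Fin 3) ℝ) (i : Fin 3) :
    polyComp T (∑ j : Fin 3, C (M i j) * X j) = ∑ j : Fin 3, C ((M * T) i j) * X j := by
  simp only [Fin.sum_univ_three, polyComp_add, polyComp_mul, polyComp_C, polyComp_X, mul_apply,
    map_add, C_mul]
  ring

lemma dotGradLin_polyComp {K K' : Matrix (Fin 3) (Fin 3) ℝ} (hK : K' * T = T * K)
    (g : MvPolynomial (Fin 3) ℝ) :
    dotGradLin K (polyComp T g) = polyComp T (dotGradLin K' g) := by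
  rw [dotGradLin, dotGradLin, polyComp_sum]
  simp only [polyComp_mul, polyComp_sum_C_mul_X, hK]
  simp only [pderiv_polyComp, mul_apply, Fin.sum_univ_three, map_add, C_mul]
  ring

lemma polyComp_quadForm (M : Matrix (Fin 3) (Fin 3) ℝ) :
    polyComp T (quadForm M) = quadForm (Tᵀ * M * T) := by
  simp only [quadForm, Fin.sum_univ_three, polyComp_add, polyComp_mul, polyComp_C, polyComp_X,
    mul_apply, transpose_apply, map_add, C_mul]
  ring

lemma gradDet_polyComp (a b c : MvPolynomial (Fin 3) ℝ) :
    gradDet (polyComp T a) (polyComp T b) (polyComp T c)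
      = C T.det * polyComp T (gradDet a b c) := by
  simp only [gradDet, det_fin_three, of_apply, cons_val_zero, cons_val_one, cons_val_two,
    head_cons, tail_cons, pderiv_polyComp, Fin.sum_univ_three, polyComp_add, polyComp_mul,
    polyComp_sub, map_sub, map_add, C_mul]
  ring

lemma pbracket_polyComp {k k' : Fin 3 → ℝ} {A A' K K' : Matrix (Fin 3) (Fin 3) ℝ}
    {F F' : MvPolynomial (Fin 3) ℝ} (hT : T.det ≠ 0) (hk : T *ᵥ k = k')
    (hA : Tᵀ * A' * T = T.det • A) (hK : K' * T = T * K) (hF : polyComp T F' = C T.det * F)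
    (g h : MvPolynomial (Fin 3) ℝ) :
    pbracket k A K F (polyComp T g) (polyComp T h) = polyComp T (pbracket k' A' K' F' g h) := by
  have hΦ : polyComp T (quadForm A' + F') = C T.det * (quadForm A + F) := by
    rw [polyComp_add, polyComp_quadForm, hA, hF, quadForm_smul, mul_add]
  have hdet : gradDet (quadForm A + F) (polyComp T g) (polyComp T h)
      = polyComp T (gradDet (quadForm A' + F') g h) := by
    refine mul_left_cancel₀ (C_ne_zero.mpr hT) ?_
    rw [← gradDet_polyComp, hΦ, gradDet_C_mul_left]
  simp only [pbracket, hdet, euler_polyComp, dotGradConst_polyComp, hk, dotGradLin_polyComp T hK,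
    polyComp_add, polyComp_mul, polyComp_sub, polyComp_C]

lemma polyComp_injective (hT : IsUnit T.det) : Function.Injective (polyComp T) := fun p q hpq => by
  simpa [polyComp_polyComp, mul_nonsing_inv T hT, polyComp_one_matrix] using
    congrArg (polyComp T⁻¹) hpq

lemma MvPolynomial.IsHomogeneous.polyComp {n : ℕ} {F : MvPolynomial (Fin 3) ℝ}
    (hF : F.IsHomogeneous n) : (polyComp T F).IsHomogeneous n := by
  have := hF.aeval (fun i => ∑ j : Fin 3, C (T i j) * X j) fun i =>
    IsHomogeneous.sum _ _ _ fun j _ => (isHomogeneous_C _ _).mul (isHomogeneous_X ℝ j)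
  rwa [zero_add, one_mul] at this

lemma exists_isSymm_transpose_mul_mul_eq (hT : IsUnit T.det) {A : Matrix (Fin 3) (Fin 3) ℝ}
    (hA : A.IsSymm) : ∃ A' : Matrix (Fin 3) (Fin 3) ℝ, A'.IsSymm ∧ Tᵀ * A' * T = T.det • A := by
  refine ⟨T.det • (T⁻¹ᵀ * A * T⁻¹), IsSymm.smul ?_ _, ?_⟩
  · simp [IsSymm, transpose_mul, hA.eq, mul_assoc]
  · rw [Matrix.mul_smul, Matrix.smul_mul]
    congr 1
    calc Tᵀ * (T⁻¹ᵀ * A * T⁻¹) * T = (T⁻¹ * T)ᵀ * A * (T⁻¹ * T) := by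
          simp only [transpose_mul, mul_assoc]
      _ = A := by rw [nonsing_inv_mul T hT, transpose_one, one_mul, mul_one]

lemma exists_isHomogeneous_polyComp_eq (hT : IsUnit T.det) {n : ℕ}
    {F : MvPolynomial (Fin 3) ℝ} (hF : F.IsHomogeneous n) :
    ∃ F' : MvPolynomial (Fin 3) ℝ, F'.IsHomogeneous n ∧ polyComp T F' = C T.det * F := by
  refine ⟨C T.det * polyComp T⁻¹ F, (hF.polyComp T⁻¹).C_mul _, ?_⟩
  rw [polyComp_mul, polyComp_C, polyComp_polyComp, nonsing_inv_mul T hT, polyComp_one_matrix]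

end Transport

lemma eval_quadForm (M : Matrix (Fin 3) (Fin 3) ℝ) (x : Fin 3 → ℝ) :
    eval x (quadForm M) = x ⬝ᵥ M *ᵥ x := by
  simp only [quadForm, map_sum, map_mul, eval_C, eval_X, dotProduct, mulVec, Finset.mul_sum]
  exact Finset.sum_congr rfl fun i _ => Finset.sum_congr rfl fun j _ => by ring

lemma Matrix.IsSymm.eq_zero_of_quadForm_eq_zero {A : Matrix (Fin 3) (Fin 3) ℝ} (hA : A.IsSymm)
    (h : quadForm A = 0) : A = 0 := by
  have hx : ∀ x, x ⬝ᵥ A *ᵥ x = 0 := fun x => by rw [← eval_quadForm, h, map_zero]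
  ext i j
  have hii := hx (Pi.single i 1)
  have hjj := hx (Pi.single j 1)
  have hij := hx (Pi.single i 1 + Pi.single j 1)
  simp only [mulVec_add, dotProduct_add, add_dotProduct, mulVec_single_one,
    single_one_dotProduct, col_apply, hA.apply i j] at hii hjj hij
  rw [Matrix.zero_apply]
  linarith

lemma isHomogeneous_quadForm (M : Matrix (Fin 3) (Fin 3) ℝ) : (quadForm M).IsHomogeneous 2 :=
  IsHomogeneous.sum _ _ _ fun _ _ => IsHomogeneous.sum _ _ _ fun _ _ =>
    ((isHomogeneous_C _ _).mul (isHomogeneous_X _ _)).mul (isHomogeneous_X _ _)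

lemma MvPolynomial.IsHomogeneous.eq_zero_of_add_eq_zero {σ R : Type*} [CommRing R]
    {p q : MvPolynomial σ R} {m n : ℕ} (hp : p.IsHomogeneous m) (hq : q.IsHomogeneous n)
    (hmn : m ≠ n) (h : p + q = 0) : p = 0 ∧ q = 0 := by
  have hq' : q = -p := eq_neg_of_add_eq_zero_right h
  have : q = 0 := by
    by_contra hne
    exact hmn ((hq' ▸ hp.neg).inj_right hq hne)
  exact ⟨by simpa [this] using h, this⟩

@[simp] lemma euler_X (i : Fin 3) : euler (X i : MvPolynomial (Fin 3) ℝ) = X i := by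
  simp [euler, pderiv_X, Pi.single_apply]

@[simp] lemma dotGradConst_X (k : Fin 3 → ℝ) (i : Fin 3) : dotGradConst k (X i) = C (k i) := by
  simp [dotGradConst, pderiv_X, Pi.single_apply]

@[simp] lemma dotGradLin_X (K : Matrix (Fin 3) (Fin 3) ℝ) (i : Fin 3) :
    dotGradLin K (X i) = ∑ j : Fin 3, C (K i j) * X j := by
  simp [dotGradLin, pderiv_X, Pi.single_apply]

lemma sum_X_mul_pbracket_X (k : Fin 3 → ℝ) (A K : Matrix (Fin 3) (Fin 3) ℝ)
    (F : MvPolynomial (Fin 3) ℝ) :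
    X 0 * pbracket k A K F (X 1) (X 2) + X 1 * pbracket k A K F (X 2) (X 0)
      + X 2 * pbracket k A K F (X 0) (X 1) = euler (quadForm A + F) := by
  simp [pbracket, gradDet, det_fin_three, euler, pderiv_X, Fin.sum_univ_three]
  ring

lemma eq_zero_of_forall_cross_eq_zero {k : Fin 3 → ℝ} {K : Matrix (Fin 3) (Fin 3) ℝ}
    (hK : K.trace = 0)
    (h : ∀ (x : Fin 3 → ℝ) (i j : Fin 3),
      (x i * k j - k i * x j) / 2 + (x i * (K *ᵥ x) j - (K *ᵥ x) i * x j) / 3 = 0) :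
    k = 0 ∧ K = 0 := by
  have hoff : ∀ i j, i ≠ j → k j = 0 ∧ K j i = 0 := by
    intro i j hij
    -- at `±eᵢ` the linear terms change sign while the quadratic ones do not
    have h₁ := h (Pi.single i 1) i j
    have h₂ := h (-Pi.single i 1) i j
    simp [mulVec_neg, hij.symm] at h₁ h₂
    constructor <;> linarith
  have hdiag : ∀ i j, i ≠ j → K i i = K j j := by
    intro i j hij
    have h₁ := h (Pi.single i 1 + Pi.single j 1) i j
    simp [mulVec_add, hij, hij.symm, (hoff i j hij).2, (hoff j i hij.symm).2] at h₁
    linarith [(hoff i j hij).1, (hoff j i hij.symm).1]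
  refine ⟨funext fun j => ?_, ext fun i j => ?_⟩
  · obtain ⟨i, hij⟩ := exists_ne j
    exact (hoff i j hij).1
  · rcases eq_or_ne i j with rfl | hij
    · rw [trace_fin_three] at hK
      have h01 := hdiag 0 1 (by decide)
      have h02 := hdiag 0 2 (by decide)
      fin_cases i <;> simp <;> linarith
    · exact (hoff j i hij.symm).2

lemma euler_add (g h : MvPolynomial (Fin 3) ℝ) : euler (g + h) = euler g + euler h := by
  simp only [euler, map_add, mul_add, Finset.sum_add_distrib]

lemma MvPolynomial.IsHomogeneous.euler_eq {n : ℕ} {φ : MvPolynomial (Fin 3) ℝ}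
    (h : φ.IsHomogeneous n) : euler φ = C (n : ℝ) * φ := by
  rw [euler, h.sum_X_mul_pderiv, nsmul_eq_mul, map_natCast]

lemma eq_zero_of_pbracket_X_eq_zero {k : Fin 3 → ℝ} {A K : Matrix (Fin 3) (Fin 3) ℝ}
    {G : MvPolynomial (Fin 3) ℝ} (hA : A.IsSymm) (hK : K.trace = 0) (hG : G.IsHomogeneous 3)
    (h : ∀ i j, pbracket k A K G (X i) (X j) = 0) : k = 0 ∧ A = 0 ∧ K = 0 ∧ G = 0 := by
  have hEuler : C 2 * quadForm A + C 3 * G = 0 := by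
    have := sum_X_mul_pbracket_X k A K G
    rw [h, h, h, euler_add, (isHomogeneous_quadForm A).euler_eq, hG.euler_eq] at this
    simpa using this.symm
  obtain ⟨hq, hG0⟩ := ((isHomogeneous_quadForm A).C_mul 2).eq_zero_of_add_eq_zero
    (hG.C_mul 3) (by norm_num) hEuler
  obtain rfl : A = 0 := hA.eq_zero_of_quadForm_eq_zero <| by simpa using hq
  obtain rfl : G = 0 := by simpa using hG0
  obtain ⟨rfl, rfl⟩ := eq_zero_of_forall_cross_eq_zero hK fun x i j => by
    simpa [pbracket, quadForm, gradDet, det_fin_three, mulVec, dotProduct, div_eq_inv_mul] using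
      congrArg (eval x) (h i j)
  exact ⟨rfl, rfl, rfl, rfl⟩

lemma quadForm_sub (M N : Matrix (Fin 3) (Fin 3) ℝ) :
    quadForm (M - N) = quadForm M - quadForm N := by
  simp only [quadForm, Matrix.sub_apply, map_sub, sub_mul, Finset.sum_sub_distrib]

lemma gradDet_sub_left (a a' b c : MvPolynomial (Fin 3) ℝ) :
    gradDet (a - a') b c = gradDet a b c - gradDet a' b c := by
  simp only [gradDet, det_fin_three, of_apply, cons_val_zero, cons_val_one, cons_val_two,
    head_cons, tail_cons, map_sub]
  ring

lemma dotGradConst_sub (k k' : Fin 3 → ℝ) (g : MvPolynomial (Fin 3) ℝ) :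
    dotGradConst (k - k') g = dotGradConst k g - dotGradConst k' g := by
  simp only [dotGradConst, Pi.sub_apply, map_sub, sub_mul, Finset.sum_sub_distrib]

lemma dotGradLin_sub (K K' : Matrix (Fin 3) (Fin 3) ℝ) (g : MvPolynomial (Fin 3) ℝ) :
    dotGradLin (K - K') g = dotGradLin K g - dotGradLin K' g := by
  simp only [dotGradLin, Matrix.sub_apply, map_sub, sub_mul, Finset.sum_sub_distrib]

lemma pbracket_sub (k₁ k₂ : Fin 3 → ℝ) (A₁ A₂ K₁ K₂ : Matrix (Fin 3) (Fin 3) ℝ)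
    (F₁ F₂ g h : MvPolynomial (Fin 3) ℝ) :
    pbracket k₁ A₁ K₁ F₁ g h - pbracket k₂ A₂ K₂ F₂ g h
      = pbracket (k₁ - k₂) (A₁ - A₂) (K₁ - K₂) (F₁ - F₂) g h := by
  have hΦ : quadForm (A₁ - A₂) + (F₁ - F₂) = (quadForm A₁ + F₁) - (quadForm A₂ + F₂) := by
    rw [quadForm_sub, sub_add_sub_comm]
  simp only [pbracket, hΦ, gradDet_sub_left, dotGradConst_sub, dotGradLin_sub]
  ring

lemma eq_of_pbracket_eq {k₁ k₂ : Fin 3 → ℝ} {A₁ A₂ K₁ K₂ : Matrix (Fin 3) (Fin 3) ℝ}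
    {F₁ F₂ : MvPolynomial (Fin 3) ℝ} (hA₁ : A₁.IsSymm) (hA₂ : A₂.IsSymm) (hK₁ : K₁.trace = 0)
    (hK₂ : K₂.trace = 0) (hF₁ : F₁.IsHomogeneous 3) (hF₂ : F₂.IsHomogeneous 3)
    (h : ∀ g h, pbracket k₁ A₁ K₁ F₁ g h = pbracket k₂ A₂ K₂ F₂ g h) :
    k₁ = k₂ ∧ A₁ = A₂ ∧ K₁ = K₂ ∧ F₁ = F₂ := by
  have hKtr : (K₁ - K₂).trace = 0 := by rw [trace_sub, hK₁, hK₂, sub_zero]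
  have hsub : ∀ i j, pbracket (k₁ - k₂) (A₁ - A₂) (K₁ - K₂) (F₁ - F₂) (X i) (X j) = 0 :=
    fun i j => by rw [← pbracket_sub, h, sub_self]
  obtain ⟨hk, hA, hK, hF⟩ := eq_zero_of_pbracket_X_eq_zero (hA₁.sub hA₂) hKtr (hF₁.sub hF₂) hsub
  exact ⟨sub_eq_zero.mp hk, sub_eq_zero.mp hA, sub_eq_zero.mp hK, sub_eq_zero.mp hF⟩

theorem quadratic_deformation_isomorphism_general
    (k : Fin 3 → ℝ) (A : Matrix (Fin 3) (Fin 3) ℝ) (hA : A.IsSymm)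
    (K₁ K₂ : Matrix (Fin 3) (Fin 3) ℝ) (hK₁ : K₁.trace = 0) (hK₂ : K₂.trace = 0)
    (F₁ F₂ : MvPolynomial (Fin 3) ℝ)
    (hF₁ : F₁.IsHomogeneous 3) (hF₂ : F₂.IsHomogeneous 3)
    (T : Matrix (Fin 3) (Fin 3) ℝ) (hT : IsUnit T.det) :
    (∀ g h, pbracket k A K₁ F₁ (polyComp T g) (polyComp T h)
        = polyComp T (pbracket k A K₂ F₂ g h)) ↔
      (T.mulVec k = k ∧ Tᵀ * A * T = T.det • A ∧
        K₂ = T * K₁ * T⁻¹ ∧ polyComp T F₂ = C T.det * F₁) := by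
  have hconj : T * K₁ * T⁻¹ * T = T * K₁ := by rw [mul_assoc, nonsing_inv_mul T hT, mul_one]
  constructor
  · intro H
    obtain ⟨A', hA'symm, hA'⟩ := exists_isSymm_transpose_mul_mul_eq T hT hA
    obtain ⟨F', hF'hom, hF'⟩ := exists_isHomogeneous_polyComp_eq T hT hF₁
    have hK' : (T * K₁ * T⁻¹).trace = 0 := by
      rw [trace_conj ((isUnit_iff_isUnit_det T).mpr hT), hK₁]
    have hbr : ∀ g h, pbracket (T *ᵥ k) A' (T * K₁ * T⁻¹) F' g h = pbracket k A K₂ F₂ g h :=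
      fun g h => polyComp_injective T hT <|
        (pbracket_polyComp T hT.ne_zero rfl hA' hconj hF' g h).symm.trans (H g h)
    obtain ⟨hk, rfl, hK, rfl⟩ := eq_of_pbracket_eq hA'symm hA hK' hK₂ hF'hom hF₂ hbr
    exact ⟨hk, hA', hK.symm, hF'⟩
  · rintro ⟨hk, hA', rfl, hF⟩
    exact pbracket_polyComp T hT.ne_zero hk hA' hconj hF

/-- Let `(k, f = XᵀAX)` be a compatible pair (`A` symmetric,
`Ak = 0`) and for `i = 1,2` let `(Kᵢ,Fᵢ)` be compatible pairs (`tr Kᵢ = 0`, `Fᵢ`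
homogeneous cubic, `(KᵢX)·∇Fᵢ = 0`) such that both deformed brackets satisfy the
Jacobi identity. Then `T ∈ GL(3,ℝ)` pushes the first Poisson structure forward to the
second — `{g∘T, h∘T}₁ = ({g,h}₂)∘T` for all `g, h` — if and only if `Tk = k`,
`TᵀAT = det(T)·A`, `K₂ = TK₁T⁻¹` and `F₂∘T = det(T)·F₁`. -/
theorem quadratic_deformation_isomorphism
    (k : Fin 3 → ℝ) (A : Matrix (Fin 3) (Fin 3) ℝ) (hA : A.IsSymm) (hAk : A.mulVec k = 0)
    (K₁ K₂ : Matrix (Fin 3) (Fin 3) ℝ) (hK₁ : K₁.trace = 0) (hK₂ : K₂.trace = 0)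
    (F₁ F₂ : MvPolynomial (Fin 3) ℝ)
    (hF₁ : F₁.IsHomogeneous 3) (hF₂ : F₂.IsHomogeneous 3)
    (hK₁F₁ : dotGradLin K₁ F₁ = 0) (hK₂F₂ : dotGradLin K₂ F₂ = 0)
    (hJac₁ : ∀ g h l, pbracket k A K₁ F₁ (pbracket k A K₁ F₁ g h) l
                    + pbracket k A K₁ F₁ (pbracket k A K₁ F₁ h l) g
                    + pbracket k A K₁ F₁ (pbracket k A K₁ F₁ l g) h = 0)
    (hJac₂ : ∀ g h l, pbracket k A K₂ F₂ (pbracket k A K₂ F₂ g h) l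
                    + pbracket k A K₂ F₂ (pbracket k A K₂ F₂ h l) g
                    + pbracket k A K₂ F₂ (pbracket k A K₂ F₂ l g) h = 0)
    (T : Matrix (Fin 3) (Fin 3) ℝ) (hT : IsUnit T.det) :
    (∀ g h, pbracket k A K₁ F₁ (polyComp T g) (polyComp T h)
        = polyComp T (pbracket k A K₂ F₂ g h)) ↔
      (T.mulVec k = k ∧ Tᵀ * A * T = T.det • A ∧
        K₂ = T * K₁ * T⁻¹ ∧ polyComp T F₂ = C T.det * F₁) :=
  quadratic_deformation_isomorphism_general k A hA K₁ K₂ hK₁ hK₂ F₁ F₂ hF₁ hF₂ T hT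
end
end

section
/- Let λ ≠ 0 be real and K = diag(λ, λ, −2λ), and let A = diag(1,0,0) and k = e₃ = (0,0,1)ᵀ (the Lie-Poisson structure with compatible pair (e₃, x₁²)). Suppose K̃ = T K T⁻¹ for some T ∈ GL(3,ℝ) whose third row is (0,0,1), and F̃ ∈ ℝ[x₁,x₂,x₃] is a homogeneous cubic polynomial satisfying (K̃X)·∇F̃ = 0 and ∂F̃/∂x₃ = −(1/6)·Xᵀ((12A + ẽ₃)K̃)X, where ẽ₃ = [[0,−1,0],[1,0,0],[0,0,0]]. Then there exists T′ ∈ GL(3,ℝ) with T′e₃ = e₃ and T′ᵀAT′ = det(T′)·A such that T′K̃T′⁻¹ = K and det(T′)·F̃∘T′⁻¹ = −2λ·x₁²x₃. -/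
open MvPolynomial Matrix

noncomputable section

/-! ### Auxiliary lemmas on monomial exponents over `Fin 3` -/

def mk3 (i j k : ℕ) : Fin 3 →₀ ℕ :=
  Finsupp.single 0 i + Finsupp.single 1 j + Finsupp.single 2 k

lemma mk3_apply0 (i j k : ℕ) : mk3 i j k 0 = i := by simp [mk3, Finsupp.single_apply]
lemma mk3_apply1 (i j k : ℕ) : mk3 i j k 1 = j := by simp [mk3, Finsupp.single_apply]
lemma mk3_apply2 (i j k : ℕ) : mk3 i j k 2 = k := by simp [mk3, Finsupp.single_apply]

lemma mk3_inj {i j k i' j' k' : ℕ} : mk3 i j k = mk3 i' j' k' ↔ i = i' ∧ j = j' ∧ k = k' := by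
  constructor
  · intro h
    refine ⟨?_, ?_, ?_⟩
    · have := congrFun (congrArg (fun f : Fin 3 →₀ ℕ => (f : Fin 3 → ℕ)) h) 0
      simpa [mk3_apply0] using this
    · have := congrFun (congrArg (fun f : Fin 3 →₀ ℕ => (f : Fin 3 → ℕ)) h) 1
      simpa [mk3_apply1] using this
    · have := congrFun (congrArg (fun f : Fin 3 →₀ ℕ => (f : Fin 3 → ℕ)) h) 2
      simpa [mk3_apply2] using this
  · rintro ⟨rfl, rfl, rfl⟩; rfl

@[simp] lemma mk3_inj' {i j k i' j' k' : ℕ} :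
    mk3 i j k = mk3 i' j' k' ↔ i = i' ∧ j = j' ∧ k = k' := mk3_inj

@[simp] lemma single0_eq : (Finsupp.single (0 : Fin 3) 1) = mk3 1 0 0 := by simp [mk3]
@[simp] lemma single1_eq : (Finsupp.single (1 : Fin 3) 1) = mk3 0 1 0 := by simp [mk3]
@[simp] lemma single2_eq : (Finsupp.single (2 : Fin 3) 1) = mk3 0 0 1 := by simp [mk3]

@[simp] lemma zero_eq_mk3 : (0 : Fin 3 →₀ ℕ) = mk3 0 0 0 := by simp [mk3]

@[simp] lemma mk3_add (i j k i' j' k' : ℕ) :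
    mk3 i j k + mk3 i' j' k' = mk3 (i + i') (j + j') (k + k') := by
  ext l
  fin_cases l <;> simp [Finsupp.add_apply, mk3_apply0, mk3_apply1, mk3_apply2]

@[simp] lemma mk3_sub (i j k i' j' k' : ℕ) :
    mk3 i j k - mk3 i' j' k' = mk3 (i - i') (j - j') (k - k') := by
  ext l
  fin_cases l <;> simp [Finsupp.tsub_apply, mk3_apply0, mk3_apply1, mk3_apply2]

lemma degree_eq (m : Fin 3 →₀ ℕ) : m.degree = m 0 + m 1 + m 2 := by
  rw [Finsupp.degree_apply, Finset.sum_subset (Finset.subset_univ _)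
    (by intro x _ hx; exact Finsupp.notMem_support_iff.mp hx)]
  rw [Fin.sum_univ_three]

lemma coeff_pderiv (i : Fin 3) (f : MvPolynomial (Fin 3) ℝ) (m : Fin 3 →₀ ℕ) :
    coeff m (pderiv i f) = ((m i : ℝ) + 1) * coeff (m + Finsupp.single i 1) f := by
  induction f using MvPolynomial.induction_on' with
  | add p q hp hq => simp [hp, hq, mul_add]
  | monomial s a =>
    rw [pderiv_monomial, coeff_monomial, coeff_monomial]
    split_ifs with h1 h2 h2
    · have hsi : s i = m i + 1 := by
        have := congrFun (congrArg (fun f : Fin 3 →₀ ℕ => (f : Fin 3 → ℕ)) h2) i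
        simpa [Finsupp.single_apply] using this
      rw [hsi]; push_cast; ring
    · rcases Nat.eq_zero_or_pos (s i) with h0 | h0
      · simp [h0]
      · exfalso; apply h2
        ext l
        have := congrFun (congrArg (fun f : Fin 3 →₀ ℕ => (f : Fin 3 → ℕ)) h1) l
        simp only [Finsupp.coe_tsub, Pi.sub_apply] at this
        simp only [Finsupp.add_apply]
        rcases eq_or_ne l i with rfl | hl
        · simp only [Finsupp.single_eq_same] at this ⊢; omega
        · simp only [Finsupp.single_eq_of_ne hl] at this ⊢; omega
    · exfalso; apply h1
      ext l
      have := congrFun (congrArg (fun f : Fin 3 →₀ ℕ => (f : Fin 3 → ℕ)) h2) l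
      simp only [Finsupp.add_apply] at this
      simp only [Finsupp.coe_tsub, Pi.sub_apply, Finsupp.add_apply]
      rcases eq_or_ne l i with rfl | hl
      · simp only [Finsupp.single_eq_same] at this ⊢; omega
      · simp only [Finsupp.single_eq_of_ne hl] at this ⊢; omega
    · ring



set_option maxHeartbeats 1000000 in
lemma nat_split3 {i j k : ℕ} (h : i + j + k = 3) :
    (i = 3 ∧ j = 0 ∧ k = 0) ∨ (i = 2 ∧ j = 1 ∧ k = 0) ∨ (i = 2 ∧ j = 0 ∧ k = 1) ∨
    (i = 1 ∧ j = 2 ∧ k = 0) ∨ (i = 1 ∧ j = 1 ∧ k = 1) ∨ (i = 1 ∧ j = 0 ∧ k = 2) ∨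
    (i = 0 ∧ j = 3 ∧ k = 0) ∨ (i = 0 ∧ j = 2 ∧ k = 1) ∨ (i = 0 ∧ j = 1 ∧ k = 2) ∨
    (i = 0 ∧ j = 0 ∧ k = 3) := by
  have hi : i ≤ 3 := by omega
  have hj : j ≤ 3 := by omega
  have hk : k ≤ 3 := by omega
  interval_cases i <;> interval_cases j <;> interval_cases k <;> omega

set_option maxHeartbeats 1000000 in
lemma hom3_eq_monomial (F : MvPolynomial (Fin 3) ℝ) (hF : F.IsHomogeneous 3)
    (h300 : coeff (mk3 3 0 0) F = 0) (h210 : coeff (mk3 2 1 0) F = 0)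
    (h120 : coeff (mk3 1 2 0) F = 0) (h030 : coeff (mk3 0 3 0) F = 0)
    (h111 : coeff (mk3 1 1 1) F = 0) (h102 : coeff (mk3 1 0 2) F = 0)
    (h021 : coeff (mk3 0 2 1) F = 0) (h012 : coeff (mk3 0 1 2) F = 0)
    (h003 : coeff (mk3 0 0 3) F = 0) :
    F = monomial (mk3 2 0 1) (coeff (mk3 2 0 1) F) := by
  apply MvPolynomial.ext
  intro m
  rw [coeff_monomial]
  by_cases hdeg : m 0 + m 1 + m 2 = 3
  · obtain ⟨i, hi⟩ : ∃ n, m 0 = n := ⟨_, rfl⟩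
    obtain ⟨j, hj⟩ : ∃ n, m 1 = n := ⟨_, rfl⟩
    obtain ⟨k, hk⟩ : ∃ n, m 2 = n := ⟨_, rfl⟩
    have hm : m = mk3 i j k := by
      ext l
      fin_cases l <;>
        simp [mk3_apply0, mk3_apply1, mk3_apply2, ← hi, ← hj, ← hk]
    subst hm
    rw [mk3_apply0, mk3_apply1, mk3_apply2] at hdeg
    clear hi hj hk
    have hd := nat_split3 hdeg
    rcases hd with ⟨rfl, rfl, rfl⟩ | ⟨rfl, rfl, rfl⟩ | ⟨rfl, rfl, rfl⟩ | ⟨rfl, rfl, rfl⟩ |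
      ⟨rfl, rfl, rfl⟩ | ⟨rfl, rfl, rfl⟩ | ⟨rfl, rfl, rfl⟩ | ⟨rfl, rfl, rfl⟩ |
      ⟨rfl, rfl, rfl⟩ | ⟨rfl, rfl, rfl⟩ <;>
      norm_num [mk3_inj'] <;>
      assumption
  · rw [hF.coeff_eq_zero (by rw [degree_eq]; exact hdeg),
      if_neg (fun hcon => hdeg (by rw [← hcon, mk3_apply0, mk3_apply1, mk3_apply2]))]

set_option maxHeartbeats 1000000 in
/-- Let `λ ≠ 0`, `K = diag(λ,λ,−2λ)`, `A = diag(1,0,0)`,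
`k = e₃` (the Lie-Poisson structure with compatible pair `(e₃, x²)`, Case (10)).
Every quadratic deformation pair `(K̃, F̃)` with `K̃ = TKT⁻¹` for some `T` whose third
row is `(0,0,1)` — i.e. `F̃` homogeneous cubic, `(K̃X)·∇F̃ = 0`, and
`∂F̃/∂x₃ = −(1/6)Xᵀ((12A + ẽ₃)K̃)X` — is isomorphic, via some `T′` in the
automorphism group (`T′e₃ = e₃`, `T′ᵀAT′ = det(T′)·A`), to the pair
`(K, −2λ·x²z)`. -/
theorem case10_deformation_normal_form
    (lam : ℝ) (hlam : lam ≠ 0)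
    (K : Matrix (Fin 3) (Fin 3) ℝ) (hK : K = Matrix.diagonal ![lam, lam, -2 * lam])
    (A : Matrix (Fin 3) (Fin 3) ℝ) (hA : A = Matrix.diagonal ![1, 0, 0])
    (Ktil : Matrix (Fin 3) (Fin 3) ℝ)
    (hKtil : ∃ T : Matrix (Fin 3) (Fin 3) ℝ, IsUnit T.det ∧
      T 2 0 = 0 ∧ T 2 1 = 0 ∧ T 2 2 = 1 ∧ Ktil = T * K * T⁻¹)
    (e3til : Matrix (Fin 3) (Fin 3) ℝ) (he3til : e3til = !![0, -1, 0; 1, 0, 0; 0, 0, 0])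
    (Ftil : MvPolynomial (Fin 3) ℝ) (hFtil : Ftil.IsHomogeneous 3)
    (hcomp : dotGradLin Ktil Ftil = 0)
    (heq : pderiv 2 Ftil = -(C (1 / 6 : ℝ)) * quadForm (((12 : ℝ) • A + e3til) * Ktil)) :
    ∃ T' : Matrix (Fin 3) (Fin 3) ℝ, IsUnit T'.det ∧
      T'.mulVec ![0, 0, 1] = ![0, 0, 1] ∧ T'ᵀ * A * T' = T'.det • A ∧
      T' * Ktil * T'⁻¹ = K ∧
      C T'.det * polyComp T'⁻¹ Ftil = C (-2 * lam) * (X 0 ^ 2 * X 2) := by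
  obtain ⟨T, hdet, hT20, hT21, hT22, hKt⟩ := hKtil
  have hK' : K = !![lam, 0, 0; 0, lam, 0; 0, 0, -2 * lam] := by
    rw [hK]; ext i j
    fin_cases i <;> fin_cases j <;>
      simp [Matrix.diagonal_apply, Matrix.vecHead, Matrix.vecTail]
  have hTT : T * T⁻¹ = 1 := Matrix.mul_nonsing_inv T hdet
  have hTT' : T⁻¹ * T = 1 := Matrix.nonsing_inv_mul T hdet
  -- the third row of T⁻¹
  have hi20 : T⁻¹ 2 0 = 0 := by
    have h := congrFun (congrFun hTT 2) 0
    simpa [Matrix.mul_apply, Fin.sum_univ_three, hT20, hT21, hT22, Matrix.one_apply] using h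
  have hi21 : T⁻¹ 2 1 = 0 := by
    have h := congrFun (congrFun hTT 2) 1
    simpa [Matrix.mul_apply, Fin.sum_univ_three, hT20, hT21, hT22, Matrix.one_apply] using h
  have hi22 : T⁻¹ 2 2 = 1 := by
    have h := congrFun (congrFun hTT 2) 2
    simpa [Matrix.mul_apply, Fin.sum_univ_three, hT20, hT21, hT22, Matrix.one_apply] using h
  -- the third row of Ktil
  have hKt20 : Ktil 2 0 = 0 := by
    rw [hKt, hK']
    simp [Matrix.mul_apply, Fin.sum_univ_three, hT20, hT21, hT22, hi20]
  have hKt21 : Ktil 2 1 = 0 := by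
    rw [hKt, hK']
    simp [Matrix.mul_apply, Fin.sum_univ_three, hT20, hT21, hT22, hi21]
  have hKt22 : Ktil 2 2 = -2 * lam := by
    rw [hKt, hK']
    simp [Matrix.mul_apply, Fin.sum_univ_three, hT20, hT21, hT22, hi20, hi21, hi22]
  -- trace
  have htr : Ktil 0 0 + Ktil 1 1 + Ktil 2 2 = 0 := by
    have h1 : (T * K * T⁻¹).trace = K.trace := by
      rw [Matrix.trace_mul_cycle, hTT', one_mul]
    rw [← hKt, Matrix.trace_fin_three, Matrix.trace_fin_three, hK'] at h1
    simp [Matrix.vecHead, Matrix.vecTail] at h1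
    linarith [h1]
  have htr2 : Ktil 0 0 + Ktil 1 1 = 2 * lam := by
    rw [hKt22] at htr; linarith
  -- quadratic relation
  have hmid : (K - lam • 1) * (K + (2 * lam) • 1) = 0 := by
    rw [hK']; ext i j
    fin_cases i <;> fin_cases j <;>
      simp [Matrix.mul_apply, Fin.sum_univ_three, Matrix.one_apply, Matrix.smul_apply,
        Matrix.sub_apply, Matrix.add_apply, Matrix.vecHead, Matrix.vecTail] <;> ring
  have hq : (Ktil - lam • 1) * (Ktil + (2 * lam) • 1) = 0 := by
    rw [hKt]
    have e1 : T * K * T⁻¹ - lam • (1 : Matrix (Fin 3) (Fin 3) ℝ) = T * (K - lam • 1) * T⁻¹ := by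
      rw [Matrix.mul_sub, Matrix.sub_mul, mul_smul_comm, mul_one, Matrix.smul_mul, hTT]
    have e2 : T * K * T⁻¹ + (2 * lam) • (1 : Matrix (Fin 3) (Fin 3) ℝ)
        = T * (K + (2 * lam) • 1) * T⁻¹ := by
      rw [Matrix.mul_add, Matrix.add_mul, mul_smul_comm, mul_one, Matrix.smul_mul, hTT]
    rw [e1, e2]
    have : T * (K - lam • 1) * T⁻¹ * (T * (K + (2 * lam) • 1) * T⁻¹)
        = T * ((K - lam • 1) * (K + (2 * lam) • 1)) * T⁻¹ :=
      calc T * (K - lam • 1) * T⁻¹ * (T * (K + (2 * lam) • 1) * T⁻¹)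
          = T * (K - lam • 1) * ((T⁻¹ * T) * ((K + (2 * lam) • 1) * T⁻¹)) := by
            simp only [Matrix.mul_assoc]
        _ = T * ((K - lam • 1) * (K + (2 * lam) • 1)) * T⁻¹ := by
            rw [hTT', one_mul]; simp only [Matrix.mul_assoc]
    rw [this, hmid, Matrix.mul_zero, Matrix.zero_mul]
  have h01 := congrFun (congrFun hq 0) 1
  have h10 := congrFun (congrFun hq 1) 0
  have h00 := congrFun (congrFun hq 0) 0
  have h11 := congrFun (congrFun hq 1) 1
  simp only [Matrix.mul_apply, Fin.sum_univ_three, Matrix.sub_apply, Matrix.add_apply,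
    Matrix.smul_apply, Matrix.one_apply, Matrix.zero_apply, smul_eq_mul] at h01 h10 h00 h11
  norm_num [hKt20, hKt21, show (2:Fin 3) ≠ 1 by decide, show (2:Fin 3) ≠ 0 by decide,
    show (0:Fin 3) ≠ 2 by decide, show (1:Fin 3) ≠ 2 by decide] at h01 h10 h00 h11
  -- off-diagonal entries vanish
  have hq01 : Ktil 0 1 = 0 := by
    have h3 : Ktil 0 1 * (3 * lam) = 0 := by linear_combination h01 - Ktil 0 1 * htr2
    rcases mul_eq_zero.mp h3 with h | h
    · exact h
    · exact absurd h (by intro h'; exact hlam (by linarith))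
  have hq10 : Ktil 1 0 = 0 := by
    have h3 : Ktil 1 0 * (3 * lam) = 0 := by linear_combination h10 - Ktil 1 0 * htr2
    rcases mul_eq_zero.mp h3 with h | h
    · exact h
    · exact absurd h (by intro h'; exact hlam (by linarith))
  have hq00 : Ktil 0 0 = lam := by
    have h3 : (Ktil 0 0 - lam) * (6 * lam) = 0 := by
      linear_combination h00 - h11 + (-(Ktil 0 0 - Ktil 1 1) + 3 * lam) * htr2
    rcases mul_eq_zero.mp h3 with h | h
    · linarith
    · exact absurd h (by intro h'; exact hlam (by linarith))
  have hq11 : Ktil 1 1 = lam := by linarith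
  have Ktil_eq : Ktil = !![lam, 0, Ktil 0 2; 0, lam, Ktil 1 2; 0, 0, -2 * lam] := by
    ext i j
    fin_cases i <;> fin_cases j <;>
      simp [hq00, hq01, hq10, hq11, hKt20, hKt21, hKt22, Matrix.vecHead, Matrix.vecTail]
  -- explicit product matrix
  have hM : ((12 : ℝ) • A + e3til) * Ktil
      = !![12 * lam, -lam, 12 * Ktil 0 2 - Ktil 1 2; lam, 0, Ktil 0 2; 0, 0, 0] := by
    rw [hA, he3til]
    nth_rewrite 1 [Ktil_eq]
    ext i j
    fin_cases i <;> fin_cases j <;>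
      simp [Matrix.mul_apply, Fin.sum_univ_three, Matrix.diagonal_apply, Matrix.smul_apply,
        Matrix.add_apply, Matrix.vecHead, Matrix.vecTail] <;> ring
  rw [hM] at heq
  simp only [quadForm, Fin.sum_univ_three] at heq
  nth_rewrite 1 [Ktil_eq] at hcomp
  simp only [dotGradLin, Fin.sum_univ_three] at hcomp
  simp [Matrix.vecHead, Matrix.vecTail] at heq hcomp
  have d1 := congrArg (coeff (mk3 2 0 0)) heq
  have d2 := congrArg (coeff (mk3 1 0 1)) heq
  have d3 := congrArg (coeff (mk3 0 1 1)) heq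
  have d4 := congrArg (coeff (mk3 1 1 0)) heq
  have d5 := congrArg (coeff (mk3 0 2 0)) heq
  have d6 := congrArg (coeff (mk3 0 0 2)) heq
  have g1 := congrArg (coeff (mk3 3 0 0)) hcomp
  have g2 := congrArg (coeff (mk3 2 1 0)) hcomp
  have g3 := congrArg (coeff (mk3 1 2 0)) hcomp
  have g4 := congrArg (coeff (mk3 0 3 0)) hcomp
  have g5 := congrArg (coeff (mk3 1 0 2)) hcomp
  have g6 := congrArg (coeff (mk3 0 1 2)) hcomp
  simp only [add_mul, sub_mul, coeff_sub, coeff_add, coeff_neg, coeff_C_mul, mul_assoc,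
    coeff_X_mul', coeff_X',
    coeff_one, coeff_zero, coeff_pderiv, Finsupp.mem_support_iff, mk3_apply0, mk3_apply1,
    mk3_apply2, single0_eq, single1_eq, single2_eq, zero_eq_mk3, mk3_add, mk3_sub, mk3_inj']
    at d1 d2 d3 d4 d5 d6 g1 g2 g3 g4 g5 g6
  norm_num [-mul_eq_zero] at d1 d2 d3 d4 d5 d6 g1 g2 g3 g4 g5 g6
  -- deduce coefficient values
  have hc012 : coeff (mk3 0 1 2) Ftil = 0 := by
    have h3 : coeff (mk3 0 1 2) Ftil * (3 * lam) = 0 := by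
      linear_combination -g6 + Ktil 0 2 * d4 + 2 * Ktil 1 2 * d5
    rcases mul_eq_zero.mp h3 with h | h
    · exact h
    · exact absurd h (by intro h'; exact hlam (by linarith))
  have ha : Ktil 0 2 = 0 := by linarith [d3, hc012]
  have hc102 : coeff (mk3 1 0 2) Ftil = 0 := by
    have h3 : coeff (mk3 1 0 2) Ftil * (3 * lam) = 0 := by
      linear_combination -g5 + 2 * coeff (mk3 2 0 1) Ftil * ha + Ktil 1 2 * d4
    rcases mul_eq_zero.mp h3 with h | h
    · exact h
    · exact absurd h (by intro h'; exact hlam (by linarith))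
  have hb : Ktil 1 2 = 0 := by linarith [d2, hc102, ha]
  have hc300 : coeff (mk3 3 0 0) Ftil = 0 := by
    have h3 : coeff (mk3 3 0 0) Ftil * (3 * lam) = 0 := by linear_combination g1
    rcases mul_eq_zero.mp h3 with h | h
    · exact h
    · exact absurd h (by intro h'; exact hlam (by linarith))
  have hc210 : coeff (mk3 2 1 0) Ftil = 0 := by
    have h3 : coeff (mk3 2 1 0) Ftil * (3 * lam) = 0 := by linear_combination g2
    rcases mul_eq_zero.mp h3 with h | h
    · exact h
    · exact absurd h (by intro h'; exact hlam (by linarith))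
  have hc120 : coeff (mk3 1 2 0) Ftil = 0 := by
    have h3 : coeff (mk3 1 2 0) Ftil * (3 * lam) = 0 := by linear_combination g3
    rcases mul_eq_zero.mp h3 with h | h
    · exact h
    · exact absurd h (by intro h'; exact hlam (by linarith))
  have hc030 : coeff (mk3 0 3 0) Ftil = 0 := by
    have h3 : coeff (mk3 0 3 0) Ftil * (3 * lam) = 0 := by linear_combination g4
    rcases mul_eq_zero.mp h3 with h | h
    · exact h
    · exact absurd h (by intro h'; exact hlam (by linarith))
  have hc003 : coeff (mk3 0 0 3) Ftil = 0 := by linarith [d6]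
  have hc201 : coeff (mk3 2 0 1) Ftil = -2 * lam := by linarith [d1]
  -- Ftil is the normal-form cubic
  have hFeq : Ftil = monomial (mk3 2 0 1) (-2 * lam) := by
    rw [← hc201]
    exact hom3_eq_monomial Ftil hFtil hc300 hc210 hc120 hc030 d4 hc102 d5 hc012 hc003
  have Ktil_eq2 : Ktil = K := by
    rw [Ktil_eq, ha, hb, hK']
  -- conclude with T' = 1
  refine ⟨1, by simp, by simp, by simp, by simp [inv_one, Ktil_eq2], ?_⟩
  have hpc : polyComp ((1 : Matrix (Fin 3) (Fin 3) ℝ))⁻¹ Ftil = Ftil := by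
    rw [inv_one]
    have hfun : (fun i : Fin 3 => ∑ j : Fin 3, C ((1 : Matrix (Fin 3) (Fin 3) ℝ) i j) * X j)
        = (X : Fin 3 → MvPolynomial (Fin 3) ℝ) := by
      funext i
      fin_cases i <;>
        simp [Fin.sum_univ_three, Matrix.one_apply, Matrix.vecHead, Matrix.vecTail]
    rw [polyComp, hfun, aeval_X_left_apply]
  rw [Matrix.det_one, hpc, hFeq, C_1, one_mul, X_pow_eq_monomial,
    show (X 2 : MvPolynomial (Fin 3) ℝ) = monomial (Finsupp.single 2 1) 1 from rfl,
    monomial_mul, C_mul_monomial,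
    show Finsupp.single (0 : Fin 3) 2 + Finsupp.single 2 1 = mk3 2 0 1 from by
      ext l; fin_cases l <;> simp [mk3_apply0, mk3_apply1, mk3_apply2, Finsupp.single_apply]]
  norm_num

end
end
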